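/- arXiv:1512.06439 — 4 statements merged into one kernel-verified Lean document; each statement's English description precedes it below -/
import Mathlib

section
/- The sequence of unweighted diamond graphs {D_n} does not admit uniformly bilipschitz embeddings into the sequence of unweighted Laakso graphs {L_n}: for every C ≥ 1 there exists n ∈ ℕ such that for every m ∈ ℕ there is no map f : V(D_n) → V(L_m) and no r > 0 satisfying r·d_{D_n}(u,v) ≤ d_{L_m}(f(u),f(v)) ≤ r·C·d_{D_n}(u,v) for all u,v ∈ V(D_n). -/
/-- A graph given by a set of oriented edges. -/
structure EGraph where
  V : Type
  E : Type
  src : E → V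
  tgt : E → V

/-- The diamond graphs `D_n`: `D_0` is a single edge, and `D_{n+1}` is obtained from
`D_n` by replacing each edge `uv` by a quadrilateral `u, a, v, b` (two new vertices
per edge, encoded as `(e, false)` and `(e, true)`). -/
def diamond : ℕ → EGraph
  | 0 => { V := Bool, E := Unit, src := fun _ => false, tgt := fun _ => true }
  | n + 1 =>
    let G := diamond n
    { V := G.V ⊕ (G.E × Bool)
      E := G.E × Fin 4
      src := fun p =>
        if p.2.val = 0 then Sum.inl (G.src p.1)
        else if p.2.val = 1 then Sum.inr (p.1, false)
        else if p.2.val = 2 then Sum.inl (G.src p.1)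
        else Sum.inr (p.1, true)
      tgt := fun p =>
        if p.2.val = 0 then Sum.inr (p.1, false)
        else if p.2.val = 1 then Sum.inl (G.tgt p.1)
        else if p.2.val = 2 then Sum.inr (p.1, true)
        else Sum.inl (G.tgt p.1) }

/-- The Laakso graphs `L_n`: `L_0` is a single edge, and `L_{n+1}` is obtained from `L_n`
by replacing each edge `uv` by a copy of the pattern graph `L_1`.  In the pattern with
endpoints `u, v` and internal vertices `a = 0, b = 1, c = 2, d = 3` (encoded as
`(e, 0), …, (e, 3)`), the six edges are `u-a, a-b, a-c, b-d, c-d, d-v`. -/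
def laakso : ℕ → EGraph
  | 0 => { V := Bool, E := Unit, src := fun _ => false, tgt := fun _ => true }
  | n + 1 =>
    let G := laakso n
    { V := G.V ⊕ (G.E × Fin 4)
      E := G.E × Fin 6
      src := fun p =>
        if p.2.val = 0 then Sum.inl (G.src p.1)
        else if p.2.val = 1 then Sum.inr (p.1, 0)
        else if p.2.val = 2 then Sum.inr (p.1, 0)
        else if p.2.val = 3 then Sum.inr (p.1, 1)
        else if p.2.val = 4 then Sum.inr (p.1, 2)
        else Sum.inr (p.1, 3)
      tgt := fun p =>
        if p.2.val = 0 then Sum.inr (p.1, 0)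
        else if p.2.val = 1 then Sum.inr (p.1, 1)
        else if p.2.val = 2 then Sum.inr (p.1, 2)
        else if p.2.val = 3 then Sum.inr (p.1, 3)
        else if p.2.val = 4 then Sum.inr (p.1, 3)
        else Sum.inl (G.tgt p.1) }

/-- The simple graph underlying an `EGraph`. -/
def EGraph.toSimpleGraph (G : EGraph) : SimpleGraph G.V where
  Adj u v := u ≠ v ∧ ∃ e, (G.src e = u ∧ G.tgt e = v) ∨ (G.src e = v ∧ G.tgt e = u)
  symm := ⟨fun _ _ h => ⟨Ne.symm h.1, h.2.elim fun e he => ⟨e, he.symm⟩⟩⟩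
  loopless := ⟨fun _ h => h.1 rfl⟩

/-- The unweighted diamond graph `D_n`; its shortest path metric is
`(DiamondGraph n).dist`. -/
abbrev DiamondGraph (n : ℕ) : SimpleGraph (diamond n).V := (diamond n).toSimpleGraph

/-- The unweighted Laakso graph `L_n`; its shortest path metric is
`(LaaksoGraph n).dist`. -/
abbrev LaaksoGraph (n : ℕ) : SimpleGraph (laakso n).V := (laakso n).toSimpleGraph

/-!
The root of `D_{n+1}` has `2 ^ (n + 1)` neighbours at pairwise distance `2`, so an embedding with
scale `r` and distortion `C` sends them to points of `L_m` at pairwise distances in `[2r, 2rC]`.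
Laakso graphs are uniformly doubling: up to an additive error `2 * 4 ^ k`, `L_{m+k}` is `L_m` with
its metric scaled by `4 ^ k` (old vertices keep exactly `4 ^ k` times their distance, and every
vertex is within `4 ^ k` of an old one). Taking `4 ^ k` comparable to `r`, the images project to
distinct vertices of `L_m` within distance `⌈8C + 2⌉` of each other; as `L_m` has maximal degree
`3`, there are at most `4 ^ ⌈8C + 2⌉` of them, fewer than `2 ^ (2 * ⌈8C + 2⌉ + 1)`.
-/

namespace SimpleGraph

variable {V W : Type*} {G : SimpleGraph V} {H : SimpleGraph W}

theorem exists_walk_length_le_mul {K : ℕ} {φ : V → W}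
    (hφ : ∀ x y, G.Adj x y → ∃ q : H.Walk (φ x) (φ y), q.length ≤ K) {u v : V} (p : G.Walk u v) :
    ∃ q : H.Walk (φ u) (φ v), q.length ≤ K * p.length := by
  induction p with
  | nil => exact ⟨.nil, by simp⟩
  | cons h p ih =>
    obtain ⟨q₁, hq₁⟩ := hφ _ _ h
    obtain ⟨q₂, hq₂⟩ := ih
    exact ⟨q₁.append q₂, by rw [Walk.length_append, Walk.length_cons, mul_add_one]; omega⟩

theorem Reachable.dist_le_mul_dist {K : ℕ} {φ : V → W}
    (hφ : ∀ x y, G.Adj x y → ∃ q : H.Walk (φ x) (φ y), q.length ≤ K) {u v : V}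
    (huv : G.Reachable u v) : H.dist (φ u) (φ v) ≤ K * G.dist u v := by
  obtain ⟨p, hp⟩ := huv.exists_walk_length_eq_dist
  obtain ⟨q, hq⟩ := exists_walk_length_le_mul hφ p
  exact (dist_le q).trans (hp ▸ hq)

theorem Reachable.le_add_dist {f : V → ℕ} (hf : ∀ x y, G.Adj x y → f x ≤ f y + 1) {u v : V}
    (huv : G.Reachable u v) : f u ≤ f v + G.dist u v := by
  obtain ⟨p, hp⟩ := huv.exists_walk_length_eq_dist
  rw [← hp]
  clear hp huv
  induction p with
  | nil => simp
  | cons h p ih => have := hf _ _ h; rw [Walk.length_cons]; omega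

theorem dist_eq_two_of_adj_of_adj {s u v : V} (hne : u ≠ v) (hadj : ¬G.Adj u v)
    (hu : G.Adj s u) (hv : G.Adj s v) : G.dist u v = 2 := by
  have hle : G.dist u v ≤ 2 := dist_le (.cons hu.symm (.cons hv .nil))
  have hlt : 1 < G.dist u v :=
    (hu.symm.reachable.trans hv.reachable).one_lt_dist_of_ne_of_not_adj hne hadj
  omega

theorem exists_finset_forall_walk_length_le {d : ℕ} (hdeg : ∀ v, (G.neighborSet v).encard ≤ d)
    (c : V) (R : ℕ) :
    ∃ t : Finset V, t.card ≤ (d + 1) ^ R ∧ ∀ u (p : G.Walk u c), p.length ≤ R → u ∈ t := by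
  classical
  have hfin v := Set.encard_le_coe_iff_finite_ncard_le.mp (hdeg v)
  induction R with
  | zero =>
    refine ⟨{c}, by simp, fun u p hp => ?_⟩
    rw [Walk.eq_of_length_eq_zero (Nat.le_zero.mp hp)]
    exact Finset.mem_singleton_self c
  | succ R ih =>
    obtain ⟨t, ht, hmem⟩ := ih
    refine ⟨t.biUnion fun v => insert v (hfin v).1.toFinset, ?_, ?_⟩
    · calc _ ≤ ∑ v ∈ t, (insert v (hfin v).1.toFinset).card := Finset.card_biUnion_le
        _ ≤ ∑ _v ∈ t, (d + 1) := Finset.sum_le_sum fun v _ => (Finset.card_insert_le _ _).trans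
            (by simpa [← Set.ncard_eq_toFinset_card] using (hfin v).2)
        _ ≤ (d + 1) ^ (R + 1) := by rw [Finset.sum_const, smul_eq_mul, pow_succ]; gcongr
    · rintro u (_ | ⟨h, q⟩) hp
      · exact Finset.mem_biUnion.mpr ⟨c, hmem c .nil (Nat.zero_le _), Finset.mem_insert_self _ _⟩
      · refine Finset.mem_biUnion.mpr ⟨_, hmem _ q ?_, Finset.mem_insert_of_mem ?_⟩
        · rw [Walk.length_cons] at hp; omega
        · simpa using h.symm

theorem Connected.card_le_of_dist_le {ι : Type*} [Fintype ι] (hG : G.Connected) {d : ℕ}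
    (hdeg : ∀ v, (G.neighborSet v).encard ≤ d) {x : ι → V} (hx : Function.Injective x) (c : V)
    {R : ℕ} (hR : ∀ i, G.dist (x i) c ≤ R) : Fintype.card ι ≤ (d + 1) ^ R := by
  obtain ⟨t, ht, hmem⟩ := exists_finset_forall_walk_length_le hdeg c R
  refine le_trans ?_ ht
  rw [← Finset.card_univ]
  refine Finset.card_le_card_of_injOn x (fun i _ => ?_) hx.injOn
  obtain ⟨p, hp⟩ := hG.exists_walk_length_eq_dist (x i) c
  exact hmem _ p (hp ▸ hR i)

end SimpleGraph

open SimpleGraph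

theorem laakso_src_ne_tgt : ∀ (m : ℕ) (e : (laakso m).E), (laakso m).src e ≠ (laakso m).tgt e
  | 0, _ => Bool.false_ne_true
  | _ + 1, (_, j) => by fin_cases j <;> simp [laakso]

theorem laakso_adj_src_tgt {m : ℕ} (e : (laakso m).E) :
    (LaaksoGraph m).Adj ((laakso m).src e) ((laakso m).tgt e) :=
  ⟨laakso_src_ne_tgt m e, e, .inl ⟨rfl, rfl⟩⟩

theorem laakso_exists_walk_inl_of_adj {m : ℕ} {u v : (laakso m).V} (h : (LaaksoGraph m).Adj u v) :
    ∃ q : (LaaksoGraph (m + 1)).Walk (.inl u) (.inl v), q.length ≤ 4 := by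
  have lift (e : (laakso m).E) : ∃ q : (LaaksoGraph (m + 1)).Walk (.inl ((laakso m).src e))
      (.inl ((laakso m).tgt e)), q.length ≤ 4 :=
    have a (j : Fin 6) := laakso_adj_src_tgt (m := m + 1) (e, j)
    ⟨.cons (a 0) <| .cons (a 1) <| .cons (a 3) <| .cons (a 5) .nil, le_rfl⟩
  obtain ⟨-, e, ⟨rfl, rfl⟩ | ⟨rfl, rfl⟩⟩ := h
  · exact lift e
  · obtain ⟨q, hq⟩ := lift e
    exact ⟨q.reverse, q.length_reverse.trans_le hq⟩

theorem laakso_exists_walk_to_inl {m : ℕ} :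
    ∀ x : (laakso (m + 1)).V, ∃ (w : (laakso m).V) (p : (LaaksoGraph (m + 1)).Walk x (.inl w)),
      p.length ≤ 2
  | .inl w => ⟨w, .nil, Nat.zero_le 2⟩
  | .inr (e, j) => by
    have a (j : Fin 6) := laakso_adj_src_tgt (m := m + 1) (e, j)
    fin_cases j
    · exact ⟨_, .cons (a 0).symm .nil, one_le_two⟩
    · exact ⟨_, .cons (a 1).symm (.cons (a 0).symm .nil), le_rfl⟩
    · exact ⟨_, .cons (a 2).symm (.cons (a 0).symm .nil), le_rfl⟩
    · exact ⟨_, .cons (a 5) .nil, one_le_two⟩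

theorem laakso_connected : ∀ m, (LaaksoGraph m).Connected
  | 0 => by
    have hadj : (LaaksoGraph 0).Adj false true := laakso_adj_src_tgt (m := 0) ()
    have : Nonempty (laakso 0).V := ⟨(false : Bool)⟩
    refine ⟨fun u v => ?_⟩
    rcases u <;> rcases v
    all_goals first | exact .refl _ | exact hadj.reachable | exact hadj.reachable.symm
  | m + 1 => by
    have hm := laakso_connected m
    have : Nonempty (laakso (m + 1)).V := ⟨.inl hm.nonempty.some⟩
    refine ⟨fun x y => ?_⟩
    obtain ⟨w₁, p₁, -⟩ := laakso_exists_walk_to_inl x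
    obtain ⟨w₂, p₂, -⟩ := laakso_exists_walk_to_inl y
    obtain ⟨p⟩ := hm.preconnected w₁ w₂
    obtain ⟨q, -⟩ := exists_walk_length_le_mul (fun _ _ => laakso_exists_walk_inl_of_adj) p
    exact ⟨p₁.append (q.append p₂.reverse)⟩

/-- The would-be distance from `inl u` in `L_{m+1}`: old vertices at four times their distance in
`L_m`, and the internal vertex `j` of the copy of `L_1` on an edge at distance `![1, 2, 2, 3] j`
from its source and `![3, 2, 2, 1] j` from its target. Being `1`-Lipschitz, it bounds distances
from below. -/
noncomputable def laaksoPotential {m : ℕ} (u : (laakso m).V) : (laakso (m + 1)).V → ℕ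
  | .inl w => 4 * (LaaksoGraph m).dist u w
  | .inr (e, j) => min (4 * (LaaksoGraph m).dist u ((laakso m).src e) + ![1, 2, 2, 3] j)
      (4 * (LaaksoGraph m).dist u ((laakso m).tgt e) + ![3, 2, 2, 1] j)

theorem laaksoPotential_le_add_one {m : ℕ} (u : (laakso m).V) {x y : (laakso (m + 1)).V}
    (h : (LaaksoGraph (m + 1)).Adj x y) : laaksoPotential u x ≤ laaksoPotential u y + 1 := by
  obtain ⟨-, ⟨e, j⟩, ⟨rfl, rfl⟩ | ⟨rfl, rfl⟩⟩ := h <;>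
  · have := (laakso_adj_src_tgt e).diff_dist_adj (u := u)
    fin_cases j <;> simp [laakso, laaksoPotential] <;> omega

theorem laakso_dist_inl {m : ℕ} (u v : (laakso m).V) :
    (LaaksoGraph (m + 1)).dist (.inl u) (.inl v) = 4 * (LaaksoGraph m).dist u v := by
  apply le_antisymm
  · exact ((laakso_connected m).preconnected u v).dist_le_mul_dist
      (φ := Sum.inl) (fun _ _ => laakso_exists_walk_inl_of_adj)
  · simpa [laaksoPotential, dist_comm (u := v)] using ((laakso_connected (m + 1)).preconnected
      (.inl u) (.inl v)).le_add_dist (fun _ _ => laaksoPotential_le_add_one v)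

def laaksoLift : (k : ℕ) → {m : ℕ} → (laakso m).V → (laakso (m + k)).V
  | 0, _, x => x
  | k + 1, _, x => .inl (laaksoLift k x)

theorem laakso_dist_lift (k : ℕ) {m : ℕ} (u v : (laakso m).V) :
    (LaaksoGraph (m + k)).dist (laaksoLift k u) (laaksoLift k v) =
      4 ^ k * (LaaksoGraph m).dist u v := by
  induction k with
  | zero => simp [laaksoLift]
  | succ k ih =>
    calc (LaaksoGraph (m + k + 1)).dist (.inl (laaksoLift k u)) (.inl (laaksoLift k v))
        = 4 * (LaaksoGraph (m + k)).dist (laaksoLift k u) (laaksoLift k v) := laakso_dist_inl _ _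
      _ = 4 ^ (k + 1) * (LaaksoGraph m).dist u v := by rw [ih, pow_succ]; ring

theorem laakso_exists_dist_lift_lt (k m : ℕ) (x : (laakso (m + k)).V) :
    ∃ w : (laakso m).V, (LaaksoGraph (m + k)).dist x (laaksoLift k w) < 4 ^ k := by
  induction k with
  | zero => exact ⟨x, by simp [laaksoLift]⟩
  | succ k ih =>
    obtain ⟨w', p, hp⟩ := laakso_exists_walk_to_inl (m := m + k) x
    obtain ⟨w, hw⟩ := ih w'
    refine ⟨w, ?_⟩
    have htri := (laakso_connected (m + k + 1)).dist_triangle (u := x) (v := .inl w')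
      (w := .inl (laaksoLift k w))
    rw [laakso_dist_inl] at htri
    have := dist_le p
    show (LaaksoGraph (m + k + 1)).dist x (.inl (laaksoLift k w)) < 4 ^ (k + 1)
    rw [pow_succ]
    omega

theorem laakso_exists_coarse_map (k m : ℕ) :
    ∃ π : (laakso (m + k)).V → (laakso m).V, ∀ x y,
      (LaaksoGraph (m + k)).dist x y + 2 ≤ 4 ^ k * (LaaksoGraph m).dist (π x) (π y) + 2 * 4 ^ k ∧
      4 ^ k * (LaaksoGraph m).dist (π x) (π y) + 2 ≤
        (LaaksoGraph (m + k)).dist x y + 2 * 4 ^ k := by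
  choose π hπ using laakso_exists_dist_lift_lt k m
  refine ⟨π, fun x y => ?_⟩
  have hconn := laakso_connected (m + k)
  have hx := hπ x
  have hy : (LaaksoGraph (m + k)).dist (laaksoLift k (π y)) y < 4 ^ k := dist_comm.trans_lt (hπ y)
  have h₁ := hconn.dist_triangle (u := x) (v := laaksoLift k (π x)) (w := y)
  have h₂ := hconn.dist_triangle (u := laaksoLift k (π x)) (v := laaksoLift k (π y)) (w := y)
  have h₃ := hconn.dist_triangle (u := laaksoLift k (π x)) (v := x) (w := laaksoLift k (π y))
  have h₄ := hconn.dist_triangle (u := x) (v := y) (w := laaksoLift k (π y))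
  rw [dist_comm (u := laaksoLift k (π x)) (v := x)] at h₃
  rw [dist_comm (u := y)] at h₄
  rw [laakso_dist_lift] at h₂ h₃
  omega

theorem laakso_dist_lt (m : ℕ) (x y : (laakso m).V) : (LaaksoGraph m).dist x y < 3 * 4 ^ m := by
  have hcoarse := laakso_exists_coarse_map m 0
  rw [Nat.zero_add] at hcoarse
  obtain ⟨π, hπ⟩ := hcoarse
  have hL₀ : (LaaksoGraph 0).dist (π x) (π y) ≤ 1 := by
    have hadj : (LaaksoGraph 0).Adj false true := laakso_adj_src_tgt (m := 0) ()
    rcases π x <;> rcases π y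
    all_goals first
      | exact dist_self.trans_le zero_le_one
      | exact (dist_eq_one_iff_adj.mpr hadj).le
      | exact (dist_eq_one_iff_adj.mpr hadj.symm).le
  have := (hπ x y).1
  nlinarith

theorem laakso_exists_incident_edges : ∀ (m : ℕ) (v : (laakso m).V),
    ∃ g : Fin 3 → (laakso m).E, ∀ e, (laakso m).src e = v ∨ (laakso m).tgt e = v → e ∈ Set.range g
  | 0, _ => ⟨fun _ => (), fun _ _ => ⟨0, rfl⟩⟩
  | m + 1, .inl w => by
    classical
    obtain ⟨g, hg⟩ := laakso_exists_incident_edges m w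
    refine ⟨fun i => (g i, if (laakso m).src (g i) = w then 0 else 5), ?_⟩
    rintro ⟨e, j⟩ h
    obtain ⟨rfl, hw⟩ | ⟨rfl, hw⟩ : j = 0 ∧ (laakso m).src e = w ∨ j = 5 ∧ (laakso m).tgt e = w := by
      revert h; fin_cases j <;> simp [laakso]
    · obtain ⟨i, rfl⟩ := hg e (.inl hw)
      exact ⟨i, Prod.ext rfl (if_pos hw)⟩
    · obtain ⟨i, rfl⟩ := hg e (.inr hw)
      exact ⟨i, Prod.ext rfl (if_neg fun hs => laakso_src_ne_tgt m (g i) (hs.trans hw.symm))⟩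
  | m + 1, .inr (e, j) => by
    -- row `j` lists the edges of the pattern `L_1` at its internal vertex `j`
    let row : Fin 4 → Fin 3 → Fin 6 := ![![0, 1, 2], ![1, 3, 3], ![2, 4, 4], ![3, 4, 5]]
    refine ⟨fun i => (e, row j i), ?_⟩
    rintro ⟨e', j'⟩ h
    show ∃ i, ((e, row j i) : (laakso m).E × Fin 6) = (e', j')
    fin_cases j <;> fin_cases j' <;> simp_all [laakso, row, Fin.exists_fin_succ]
theorem laakso_encard_neighborSet_le (m : ℕ) (v : (laakso m).V) :
    ((LaaksoGraph m).neighborSet v).encard ≤ 3 := by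
  classical
  obtain ⟨g, hg⟩ := laakso_exists_incident_edges m v
  let other (i : Fin 3) :=
    if (laakso m).src (g i) = v then (laakso m).tgt (g i) else (laakso m).src (g i)
  have hsub : (LaaksoGraph m).neighborSet v ⊆ (Finset.univ.image other : Finset _) := by
    rintro u ⟨hne, e, ⟨rfl, rfl⟩ | ⟨rfl, rfl⟩⟩
    · obtain ⟨i, rfl⟩ := hg e (.inl rfl)
      exact Finset.mem_image.mpr ⟨i, Finset.mem_univ _, if_pos rfl⟩
    · obtain ⟨i, rfl⟩ := hg e (.inr rfl)
      exact Finset.mem_image.mpr ⟨i, Finset.mem_univ _, if_neg hne.symm⟩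
  calc _ ≤ _ := Set.encard_le_encard hsub
    _ ≤ 3 := by
      rw [Set.encard_coe_eq_coe_finsetCard]
      exact_mod_cast Finset.card_image_le.trans (by simp)

theorem exists_four_pow_scale_le {δ : ℝ} {M : ℕ} (hδ : 0 < δ) (hδM : δ < 3 * 4 ^ M) :
    ∃ k ≤ M, (4 : ℝ) ^ k < δ / 2 + 1 ∧ δ < 8 * 4 ^ k := by
  obtain ⟨k, hk₁, hk₂⟩ := exists_nat_pow_near (le_max_left 1 (δ / 2)) (by norm_num : (1 : ℝ) < 4)
  have hkM : (4 : ℝ) ^ k < 4 ^ (M + 1) := by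
    refine hk₁.trans_lt (max_lt ?_ ?_)
    · exact one_lt_pow₀ (by norm_num) (Nat.succ_ne_zero M)
    · linarith [pow_succ (4 : ℝ) M]
  refine ⟨k, Nat.lt_succ_iff.mp ((pow_lt_pow_iff_right₀ (by norm_num)).mp hkM),
    hk₁.trans_lt (max_lt (by linarith) (by linarith)), ?_⟩
  linarith [(le_max_right 1 (δ / 2)).trans_lt hk₂, pow_succ (4 : ℝ) k]

theorem laakso_card_le_of_separated {ι : Type*} [Fintype ι] {M : ℕ} (x : ι → (laakso M).V)
    {δ K : ℝ} (hδ : 0 < δ) (hK : 0 ≤ K)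
    (hx : ∀ i j, i ≠ j → δ ≤ (LaaksoGraph M).dist (x i) (x j) ∧
      ((LaaksoGraph M).dist (x i) (x j) : ℝ) ≤ K * δ) :
    Fintype.card ι ≤ 4 ^ ⌈8 * K + 2⌉₊ := by
  rcases subsingleton_or_nontrivial ι with hι | hι
  · exact (Fintype.card_le_one_iff_subsingleton.mpr hι).trans (Nat.one_le_pow _ _ (by norm_num))
  obtain ⟨i₀, i₁, hi⟩ := exists_pair_ne ι
  obtain ⟨k, hkM, hk⟩ := exists_four_pow_scale_le hδ
    ((hx i₀ i₁ hi).1.trans_lt (by exact_mod_cast laakso_dist_lt M _ _))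
  obtain ⟨m, rfl⟩ : ∃ m, M = m + k := ⟨M - k, by omega⟩
  obtain ⟨π, hπ⟩ := laakso_exists_coarse_map k m
  have hsep : ∀ i j, i ≠ j → 0 < (LaaksoGraph m).dist (π (x i)) (π (x j)) ∧
      (LaaksoGraph m).dist (π (x i)) (π (x j)) ≤ ⌈8 * K + 2⌉₊ := by
    intro i j hij
    obtain ⟨hlo, hhi⟩ := hx i j hij
    obtain ⟨h₁, h₂⟩ := hπ (x i) (x j)
    set d' := (LaaksoGraph m).dist (π (x i)) (π (x j))
    have h₁' : ((LaaksoGraph (m + k)).dist (x i) (x j) : ℝ) + 2 ≤ 4 ^ k * d' + 2 * 4 ^ k := by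
      exact_mod_cast h₁
    have h₂' : (4 : ℝ) ^ k * d' + 2 ≤ (LaaksoGraph (m + k)).dist (x i) (x j) + 2 * 4 ^ k := by
      exact_mod_cast h₂
    have h4k : (0 : ℝ) < 4 ^ k := by positivity
    constructor
    · have : (0 : ℝ) < 4 ^ k * d' := by linarith
      exact_mod_cast pos_of_mul_pos_right this h4k.le
    · have : (d' : ℝ) < 8 * K + 2 := by nlinarith
      exact Nat.cast_le.mp (this.le.trans (Nat.le_ceil _))
  refine (laakso_connected m).card_le_of_dist_le (laakso_encard_neighborSet_le m) (x := π ∘ x)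
    (fun i j hij => ?_) (π (x i₀)) (fun i => ?_)
  · by_contra hne
    have hπij : π (x i) = π (x j) := hij
    exact (hsep i j hne).1.ne' (hπij ▸ dist_self)
  · by_cases h : i = i₀
    · simp [h]
    · exact (hsep i i₀ h).2

theorem diamond_exists_edges_from_vertex : ∀ n, ∃ (s : (diamond n).V) (T : Finset (diamond n).E),
    T.card = 2 ^ n ∧ ∀ e ∈ T, (diamond n).src e = s
  | 0 => ⟨false, {()}, rfl, fun _ _ => rfl⟩
  | n + 1 => by
    obtain ⟨s, T, hT, hsrc⟩ := diamond_exists_edges_from_vertex n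
    refine ⟨.inl s, (T ×ˢ {0, 2} : Finset ((diamond n).E × Fin 4)), ?_, ?_⟩
    · exact (Finset.card_product _ _).trans (by rw [hT]; rfl)
    · rintro ⟨e, j⟩ he
      obtain ⟨he, hj⟩ := Finset.mem_product.mp he
      obtain rfl | rfl : j = 0 ∨ j = 2 := by simpa using hj
      all_goals exact congrArg Sum.inl (hsrc e he)

theorem diamond_adj_inl_src_inr {n : ℕ} (e : (diamond n).E) (b : Bool) :
    (DiamondGraph (n + 1)).Adj (.inl ((diamond n).src e)) (.inr (e, b)) := by
  refine ⟨Sum.inl_ne_inr, (e, if b then 2 else 0), .inl ?_⟩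
  cases b <;> exact ⟨rfl, rfl⟩

theorem diamond_not_adj_inr_inr {n : ℕ} (p q : (diamond n).E × Bool) :
    ¬ (DiamondGraph (n + 1)).Adj (.inr p) (.inr q) := by
  rintro ⟨-, ⟨e, j⟩, h | h⟩ <;> fin_cases j <;> simp [diamond] at h

theorem diamond_exists_finset_dist_eq_two (n : ℕ) :
    ∃ S : Finset (diamond (n + 1)).V, S.card = 2 ^ (n + 1) ∧
      ∀ w ∈ S, ∀ w' ∈ S, w ≠ w' → (DiamondGraph (n + 1)).dist w w' = 2 := by
  obtain ⟨s, T, hT, hsrc⟩ := diamond_exists_edges_from_vertex n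
  refine ⟨(T ×ˢ Finset.univ).map ⟨Sum.inr, Sum.inr_injective⟩, by simp [hT, pow_succ], ?_⟩
  simp only [Finset.mem_map, Finset.mem_product]
  rintro _ ⟨⟨e, b⟩, ⟨he, -⟩, rfl⟩ _ ⟨⟨e', b'⟩, ⟨he', -⟩, rfl⟩ hne
  refine dist_eq_two_of_adj_of_adj (s := .inl s) hne (diamond_not_adj_inr_inr _ _) ?_ ?_
  · rw [← hsrc e he]; exact diamond_adj_inl_src_inr e b
  · rw [← hsrc e' he']; exact diamond_adj_inl_src_inr e' b'

/-- The sequence of unweighted diamond graphs does not admit uniformly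
bilipschitz embeddings into the sequence of unweighted Laakso graphs: for every `C ≥ 1`
there is `n` such that for every `m` there is no map `f : V(D_n) → V(L_m)` and no `r > 0`
with `r·d_{D_n}(u,v) ≤ d_{L_m}(f u, f v) ≤ r·C·d_{D_n}(u,v)` for all `u, v`. -/
theorem diamonds_not_uniformly_bilipschitz_into_laakso :
    ∀ C : ℝ, 1 ≤ C → ∃ n : ℕ, ∀ m : ℕ,
      ¬ ∃ (f : (diamond n).V → (laakso m).V) (r : ℝ), 0 < r ∧
        ∀ u v : (diamond n).V,
          r * ((DiamondGraph n).dist u v : ℝ) ≤ ((LaaksoGraph m).dist (f u) (f v) : ℝ) ∧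
          ((LaaksoGraph m).dist (f u) (f v) : ℝ) ≤ r * C * ((DiamondGraph n).dist u v : ℝ) := by
  intro C hC
  refine ⟨2 * ⌈8 * C + 2⌉₊ + 1, fun m ⟨f, r, hr, hf⟩ => ?_⟩
  obtain ⟨S, hS, hdist⟩ := diamond_exists_finset_dist_eq_two (2 * ⌈8 * C + 2⌉₊)
  have hcard := laakso_card_le_of_separated (fun w : S => f w) (δ := 2 * r) (K := C)
    (by positivity) (by linarith) fun w w' hne => by
      obtain ⟨h₁, h₂⟩ := hf w w'
      rw [hdist w w.2 w' w'.2 (Subtype.coe_ne_coe.mpr hne), Nat.cast_two] at h₁ h₂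
      exact ⟨by linarith, by linarith⟩
  rw [Fintype.card_coe, hS] at hcard
  have h4 : 4 ^ ⌈8 * C + 2⌉₊ = 2 ^ (2 * ⌈8 * C + 2⌉₊) := by rw [pow_mul]; norm_num
  have := Nat.pow_lt_pow_right (a := 2) (by norm_num) (Nat.lt_succ_self (2 * ⌈8 * C + 2⌉₊))
  omega
end

section
/- In the unweighted diamond graph D_n, the closed ball of radius 1 centered at the bottom vertex contains exactly 2^n + 1 vertices, and every subset of this ball of diameter at most 1 contains at most 2 vertices. -/
/-- The bottom vertex of `D_n` (the vertex that evolved from the bottom vertex of `D_0`). -/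
def diamondBottom : (n : ℕ) → (diamond n).V
  | 0 => false
  | n + 1 => Sum.inl (diamondBottom n)

/-!
Every edge of `D_{n+1}` joins an old vertex to a new one, so `D_n` is bipartite and a set of
pairwise adjacent vertices has at most two elements. The neighbours of the bottom of `D_{n+1}`
are the two new vertices on each edge of `D_n` leaving the bottom, and the number of such
edges doubles at each step, since the bottom is never the target of an edge.
-/

namespace SimpleGraph

variable {V : Type*} {G : SimpleGraph V}

theorem Connected.dist_le_one_iff (hG : G.Connected) {u v : V} :
    G.dist u v ≤ 1 ↔ u = v ∨ G.Adj u v := by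
  rw [Nat.le_one_iff_eq_zero_or_eq_one, hG.dist_eq_zero_iff, dist_eq_one_iff_adj]

theorem Connected.setOf_dist_le_one (hG : G.Connected) (a : V) :
    {v | G.dist a v ≤ 1} = insert a (G.neighborSet a) := by
  ext v
  rw [Set.mem_insert_iff, mem_neighborSet, eq_comm (b := a)]
  exact hG.dist_le_one_iff

theorem Colorable.ncard_le_of_dist_le_one {n : ℕ} (hc : G.Colorable n) (hG : G.Connected)
    {S : Set V} (hS : ∀ u ∈ S, ∀ v ∈ S, G.dist u v ≤ 1) : S.ncard ≤ n := by
  rw [← Nat.card_coe_set_eq]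
  refine hc.card_le_of_pairwise_adj Subtype.val fun u v huv => ?_
  exact ((hG.dist_le_one_iff).1 (hS u u.2 v v.2)).resolve_left (Subtype.coe_ne_coe.2 huv)

end SimpleGraph

open SimpleGraph

theorem diamond_finite : ∀ n, Finite (diamond n).V ∧ Finite (diamond n).E
  | 0 => ⟨inferInstanceAs (Finite Bool), inferInstanceAs (Finite Unit)⟩
  | n + 1 => by
    have ⟨_, _⟩ := diamond_finite n
    exact ⟨inferInstanceAs (Finite ((diamond n).V ⊕ ((diamond n).E × Bool))),
      inferInstanceAs (Finite ((diamond n).E × Fin 4))⟩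

instance (n : ℕ) : Finite (diamond n).V := (diamond_finite n).1

theorem diamond_succ_isLeft_src_ne_tgt {n : ℕ} (e : (diamond (n + 1)).E) :
    ((diamond (n + 1)).src e).isLeft ≠ ((diamond (n + 1)).tgt e).isLeft := by
  obtain ⟨e, i⟩ := e
  fin_cases i <;> simp [diamond]

theorem diamondGraph_succ_adj_isLeft {n : ℕ} {u v : (diamond (n + 1)).V}
    (h : (DiamondGraph (n + 1)).Adj u v) : u.isLeft ≠ v.isLeft := by
  obtain ⟨-, e, ⟨rfl, rfl⟩ | ⟨rfl, rfl⟩⟩ := h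
  · exact diamond_succ_isLeft_src_ne_tgt e
  · exact (diamond_succ_isLeft_src_ne_tgt e).symm

theorem diamondGraph_colorable_two : ∀ n, (DiamondGraph n).Colorable 2
  | 0 => (Coloring.mk (fun v : Bool => v) fun h => h.ne).colorable
  | _ + 1 => (Coloring.mk Sum.isLeft diamondGraph_succ_adj_isLeft).colorable

theorem diamondGraph_succ_adj_inl_inr_iff {n : ℕ} {x : (diamond n).V} {e : (diamond n).E}
    {b : Bool} : (DiamondGraph (n + 1)).Adj (Sum.inl x) (Sum.inr (e, b)) ↔
      x = (diamond n).src e ∨ x = (diamond n).tgt e := by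
  constructor
  · rintro ⟨-, ⟨e', i⟩, h⟩
    fin_cases i <;> grind [diamond]
  · rintro (rfl | rfl)
    · exact ⟨Sum.inl_ne_inr, (e, if b then 2 else 0), by cases b <;> simp [diamond]⟩
    · exact ⟨Sum.inl_ne_inr, (e, if b then 3 else 1), by cases b <;> simp [diamond]⟩

theorem diamond_tgt_ne_bottom : ∀ (n : ℕ) (e : (diamond n).E),
    (diamond n).tgt e ≠ diamondBottom n
  | 0, _ => by simp [diamond, diamondBottom]
  | n + 1, ⟨e, i⟩ => by
    have := diamond_tgt_ne_bottom n e
    fin_cases i <;> simp [diamond, diamondBottom, this]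

def bottomEdges (n : ℕ) : Set (diamond n).E := {e | (diamond n).src e = diamondBottom n}

theorem bottomEdges_succ (n : ℕ) :
    bottomEdges (n + 1) = bottomEdges n ×ˢ ({0, 2} : Set (Fin 4)) := by
  ext ⟨e, i⟩
  -- `(diamond (n + 1)).E` is only definitionally `(diamond n).E × Fin 4`, so membership
  -- statements must be restated at the right type before `simp` or `rw` can act on them.
  change (diamond (n + 1)).src (e, i) = diamondBottom (n + 1) ↔
    e ∈ bottomEdges n ∧ i ∈ ({0, 2} : Set (Fin 4))
  fin_cases i <;> simp [bottomEdges, diamond, diamondBottom]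

theorem ncard_bottomEdges : ∀ n, (bottomEdges n).ncard = 2 ^ n
  | 0 => by simp [bottomEdges, diamond, diamondBottom]
  | n + 1 => by
    change Set.ncard (α := (diamond n).E × Fin 4) _ = _
    rw [bottomEdges_succ, Set.ncard_prod, ncard_bottomEdges n, Set.ncard_pair (by decide),
      pow_succ]

theorem diamondGraph_neighborSet_bottom_succ (n : ℕ) :
    (DiamondGraph (n + 1)).neighborSet (diamondBottom (n + 1)) =
      Sum.inr '' (bottomEdges n ×ˢ Set.univ) := by
  ext (x | ⟨e, b⟩)
  · refine iff_of_false (fun h => diamondGraph_succ_adj_isLeft h rfl) ?_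
    rintro ⟨_, _, h⟩
    cases h
  · change (DiamondGraph (n + 1)).Adj (Sum.inl (diamondBottom n)) (Sum.inr (e, b)) ↔
      Sum.inr (e, b) ∈ Sum.inr '' (bottomEdges n ×ˢ (Set.univ : Set Bool))
    rw [diamondGraph_succ_adj_inl_inr_iff, Sum.inr_injective.mem_set_image]
    simp [bottomEdges, eq_comm, (diamond_tgt_ne_bottom n e).symm]

theorem ncard_diamondGraph_neighborSet_bottom :
    ∀ n, ((DiamondGraph n).neighborSet (diamondBottom n)).ncard = 2 ^ n
  | 0 => by
    refine Set.ncard_eq_one.2 ⟨true, Set.ext fun v => ?_⟩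
    change (DiamondGraph 0).Adj false v ↔ v = true
    cases v <;> simp [EGraph.toSimpleGraph, diamond]
  | n + 1 => by
    rw [diamondGraph_neighborSet_bottom_succ]
    change Set.ncard (α := (diamond n).V ⊕ ((diamond n).E × Bool)) _ = _
    rw [Set.ncard_image_of_injective _ Sum.inr_injective,
      Set.ncard_prod, ncard_bottomEdges, Set.ncard_univ, Nat.card_eq_fintype_card,
      Fintype.card_bool, pow_succ]

theorem diamondGraph_succ_adj_src {n : ℕ} (e : (diamond n).E) (b : Bool) :
    (DiamondGraph (n + 1)).Adj (Sum.inl ((diamond n).src e)) (Sum.inr (e, b)) :=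
  diamondGraph_succ_adj_inl_inr_iff.2 (Or.inl rfl)

theorem diamondGraph_succ_reachable_src_tgt {n : ℕ} (e : (diamond n).E) :
    (DiamondGraph (n + 1)).Reachable (Sum.inl ((diamond n).src e))
      (Sum.inl ((diamond n).tgt e)) :=
  (diamondGraph_succ_adj_src e false).reachable.trans
    (diamondGraph_succ_adj_inl_inr_iff.2 (Or.inr rfl)).reachable.symm

theorem diamondGraph_succ_reachable_inl {n : ℕ} {x y : (diamond n).V}
    (h : (DiamondGraph n).Reachable x y) :
    (DiamondGraph (n + 1)).Reachable (Sum.inl x) (Sum.inl y) := by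
  obtain ⟨w⟩ := h
  induction w with
  | nil => rfl
  | cons h _ ih =>
    obtain ⟨-, e, ⟨rfl, rfl⟩ | ⟨rfl, rfl⟩⟩ := h
    · exact (diamondGraph_succ_reachable_src_tgt e).trans ih
    · exact (diamondGraph_succ_reachable_src_tgt e).symm.trans ih

theorem diamondGraph_reachable_bottom : ∀ n (v : (diamond n).V),
    (DiamondGraph n).Reachable (diamondBottom n) v
  | 0, false => .rfl
  | 0, true => Adj.reachable ⟨Bool.false_ne_true, (), Or.inl ⟨rfl, rfl⟩⟩
  | n + 1, Sum.inl x => diamondGraph_succ_reachable_inl (diamondGraph_reachable_bottom n x)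
  | n + 1, Sum.inr (e, b) =>
    (diamondGraph_succ_reachable_inl (diamondGraph_reachable_bottom n _)).trans
      (diamondGraph_succ_adj_src e b).reachable

theorem diamondGraph_connected (n : ℕ) : (DiamondGraph n).Connected :=
  (connected_iff_exists_forall_reachable _).2 ⟨_, diamondGraph_reachable_bottom n⟩

/-- In `D_n`, the closed ball of radius `1` centered at the bottom vertex
contains exactly `2^n + 1` vertices, and every subset of this ball of diameter at most `1`
contains at most `2` vertices. -/
theorem diamond_ball_at_bottom (n : ℕ) :
    ({v : (diamond n).V | (DiamondGraph n).dist (diamondBottom n) v ≤ 1}).ncard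
        = 2 ^ n + 1 ∧
    ∀ S : Set (diamond n).V,
      S ⊆ {v : (diamond n).V | (DiamondGraph n).dist (diamondBottom n) v ≤ 1} →
      (∀ u ∈ S, ∀ v ∈ S, (DiamondGraph n).dist u v ≤ 1) →
      S.ncard ≤ 2 := by
  refine ⟨?_, fun S _ hS => (diamondGraph_colorable_two n).ncard_le_of_dist_le_one
    (diamondGraph_connected n) hS⟩
  rw [(diamondGraph_connected n).setOf_dist_le_one, Set.ncard_insert_of_notMem
    (notMem_neighborSet_self _), ncard_diamondGraph_neighborSet_bottom]
end

section
/- Every cycle in the unweighted diamond graph D_n has length 2^j for some integer j with 2 ≤ j ≤ n + 1; in particular, the length of every cycle in D_n is a power of 2. -/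
/-- A cycle in a graph: a connected subgraph in which every vertex has degree `2`. -/
def IsCycleSubgraph {V : Type} {G : SimpleGraph V} (H : G.Subgraph) : Prop :=
  H.Connected ∧ ∀ v ∈ H.verts, (H.neighborSet v).ncard = 2

/-!
Induction on `n`. A cycle has at least three vertices, so `D_0` has none. In `D_{n+1}` every edge
joins an old vertex (of `D_n`) to a new one, so a cycle `C` has as many old as new vertices. If
`C` contains both new vertices of some edge `uv` of `D_n`, it is the quadrilateral `u, a, v, b`.
Otherwise collapsing every quadrilateral back to its edge turns `C` into a cycle of `D_n` on the
old vertices of `C`, which are half of its vertices.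
-/

namespace SimpleGraph

variable {V W : Type*} {G : SimpleGraph V} {G' : SimpleGraph W}

theorem Reachable.mem_of_adj_closed {S : Set V}
    (hS : ∀ ⦃x y⦄, G.Adj x y → x ∈ S → y ∈ S) {u v : V} (h : G.Reachable u v) (hu : u ∈ S) :
    v ∈ S := by
  obtain ⟨p⟩ := h
  induction p with
  | nil => exact hu
  | cons hadj _ ih => exact ih (hS hadj hu)

theorem Reachable.map_of_eq_or_adj {f : V → W}
    (hf : ∀ ⦃x y⦄, G.Adj x y → f x = f y ∨ G'.Adj (f x) (f y)) {u v : V}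
    (h : G.Reachable u v) : G'.Reachable (f u) (f v) :=
  h.mem_of_adj_closed (S := {x | G'.Reachable (f u) (f x)}) (fun _ y hxy hx => by
    change G'.Reachable (f u) (f y)
    rcases hf hxy with heq | hadj
    exacts [heq ▸ hx, hx.trans hadj.reachable]) Reachable.rfl

namespace Subgraph

theorem Preconnected.of_eq_or_adj {H : G.Subgraph} {H' : G'.Subgraph} (hH : H.Preconnected)
    (f : V → W) (hmaps : Set.MapsTo f H.verts H'.verts) (hsurj : Set.SurjOn f H.verts H'.verts)
    (hf : ∀ ⦃x y⦄, H.Adj x y → f x = f y ∨ H'.Adj (f x) (f y)) : H'.Preconnected := by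
  refine ⟨fun u v => ?_⟩
  obtain ⟨x, hx, hxu⟩ := hsurj u.2
  obtain ⟨y, hy, hyv⟩ := hsurj v.2
  have := (hH ⟨x, hx⟩ ⟨y, hy⟩).map_of_eq_or_adj (G' := H'.coe) (f := hmaps.restrict)
    (fun a b hab => (hf hab).imp Subtype.ext id)
  convert this <;> exact Subtype.ext (by simp [*])

theorem verts_subset_of_adj_closed {H : G.Subgraph} (hH : H.Preconnected) {S : Set V}
    (hS : ∀ ⦃x y⦄, H.Adj x y → x ∈ S → y ∈ S) {u : V} (hu : u ∈ H.verts) (huS : u ∈ S) :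
    H.verts ⊆ S := fun v hv =>
  (hH ⟨u, hu⟩ ⟨v, hv⟩).mem_of_adj_closed (S := {x : H.verts | x.1 ∈ S})
    (fun _ _ h => hS h) huS

theorem ncard_inter_eq_ncard_sdiff [Finite V] {H : G.Subgraph} {k : ℕ} (hk : k ≠ 0)
    (hdeg : ∀ v ∈ H.verts, (H.neighborSet v).ncard = k) {S : Set V}
    (hS : ∀ ⦃x y⦄, G.Adj x y → (x ∈ S ↔ y ∉ S)) :
    (H.verts ∩ S).ncard = (H.verts \ S).ncard := by
  classical
  have := Fintype.ofFinite V
  have hA (x) (hx : x ∈ H.verts ∩ S) :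
      ((H.verts \ S).toFinset.bipartiteAbove H.Adj x).card = k := by
    rw [← hdeg x hx.1, ← Set.ncard_coe_finset]
    congr 1; ext y
    simp only [Finset.mem_coe, Finset.mem_bipartiteAbove, Set.mem_toFinset,
      mem_neighborSet]
    exact ⟨fun h => h.2, fun h => ⟨⟨h.snd_mem, (hS (H.adj_sub h)).1 hx.2⟩, h⟩⟩
  have hB (y) (hy : y ∈ H.verts \ S) :
      ((H.verts ∩ S).toFinset.bipartiteBelow H.Adj y).card = k := by
    rw [← hdeg y hy.1, ← Set.ncard_coe_finset]
    congr 1; ext x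
    simp only [Finset.mem_coe, Finset.mem_bipartiteBelow, Set.mem_toFinset,
      mem_neighborSet]
    exact ⟨fun h => h.2.symm,
      fun h => ⟨⟨h.snd_mem, (hS (H.adj_sub h.symm)).2 hy.2⟩, h.symm⟩⟩
  have := Finset.card_mul_eq_card_mul H.Adj (fun x hx => hA x (by simpa using hx))
    (fun y hy => hB y (by simpa using hy))
  rw [Set.ncard_eq_toFinset_card', Set.ncard_eq_toFinset_card']
  exact Nat.eq_of_mul_eq_mul_right (Nat.pos_of_ne_zero hk) this

end Subgraph

end SimpleGraph

theorem Set.eq_or_eq_of_ncard_eq_two {α : Type*} {s : Set α} (hs : s.ncard = 2) {x y z : α}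
    (hx : x ∈ s) (hy : y ∈ s) (hz : z ∈ s) (hxy : x ≠ y) : z = x ∨ z = y := by
  obtain ⟨a, b, hab, rfl⟩ := Set.ncard_eq_two.1 hs
  simp only [Set.mem_insert_iff, Set.mem_singleton_iff] at hx hy hz
  grind

theorem IsCycleSubgraph.three_le_ncard_verts {V : Type} [Finite V] {G : SimpleGraph V}
    {C : G.Subgraph} (hC : IsCycleSubgraph C) : 3 ≤ C.verts.ncard := by
  obtain ⟨v, hv⟩ := hC.1.nonempty
  have hsub : C.neighborSet v ⊆ C.verts \ {v} := fun w hw =>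
    ⟨C.neighborSet_subset_verts v hw, (C.adj_sub hw).ne'⟩
  have := (hC.2 v hv).symm.trans_le (Set.ncard_le_ncard hsub)
  rw [Set.ncard_sdiff_singleton_of_mem hv] at this
  omega

def EGraph.ends (G : EGraph) (e : G.E) : Sym2 G.V := s(G.src e, G.tgt e)

theorem EGraph.adj_iff_exists_ends {G : EGraph} {u v : G.V} :
    G.toSimpleGraph.Adj u v ↔ u ≠ v ∧ ∃ e, G.ends e = s(u, v) := by
  simp [EGraph.toSimpleGraph, EGraph.ends]

instance diamond_finite_E : (n : ℕ) → Finite (diamond n).E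
  | 0 => inferInstanceAs (Finite Unit)
  | n + 1 => have := diamond_finite_E n; inferInstanceAs (Finite ((diamond n).E × Fin 4))

instance diamond_finite_V : (n : ℕ) → Finite (diamond n).V
  | 0 => inferInstanceAs (Finite Bool)
  | n + 1 =>
    have := diamond_finite_V n
    inferInstanceAs (Finite ((diamond n).V ⊕ ((diamond n).E × Bool)))

theorem diamond_src_ne_tgt :
    ∀ (n : ℕ) (e : (diamond n).E), (diamond n).src e ≠ (diamond n).tgt e
  | 0, _ => Bool.false_ne_true
  | n + 1, ⟨e, ⟨i, hi⟩⟩ => by interval_cases i <;> simp [diamond]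

theorem diamond_ends_injective : ∀ n : ℕ, Function.Injective (diamond n).ends
  | 0, _, _, _ => rfl
  | n + 1, ⟨e, ⟨i, hi⟩⟩, ⟨e', ⟨j, hj⟩⟩, h => by
    have := diamond_src_ne_tgt n e
    interval_cases i <;> interval_cases j <;> simp [EGraph.ends, diamond] at h ⊢ <;> grind

theorem diamond_zero_not_isCycleSubgraph (C : (DiamondGraph 0).Subgraph) :
    ¬ IsCycleSubgraph C := fun hC => by
  have := hC.three_le_ncard_verts.trans (Set.ncard_le_card C.verts)
  simp [diamond] at this

section Succ

variable {n : ℕ}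

@[simp]
theorem diamondGraph_succ_adj_inl_inr {u : (diamond n).V} {p : (diamond n).E × Bool} :
    (DiamondGraph (n + 1)).Adj (.inl u) (.inr p) ↔ u ∈ (diamond n).ends p.1 := by
  obtain ⟨e, b⟩ := p
  refine EGraph.adj_iff_exists_ends.trans ⟨?_, fun h => ⟨Sum.inl_ne_inr, ?_⟩⟩
  · rintro ⟨-, ⟨e', ⟨i, hi⟩⟩, h⟩
    interval_cases i <;> cases b <;> simp [EGraph.ends, diamond] at h ⊢ <;> grind
  · rcases Sym2.mem_iff.mp h with rfl | rfl <;> cases b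
    exacts [⟨(e, 0), by simp [EGraph.ends, diamond]⟩, ⟨(e, 2), by simp [EGraph.ends, diamond]⟩,
      ⟨(e, 1), by simp [EGraph.ends, diamond, Sym2.eq_swap]⟩,
      ⟨(e, 3), by simp [EGraph.ends, diamond, Sym2.eq_swap]⟩]

@[simp]
theorem diamondGraph_succ_adj_inr_inl {u : (diamond n).V} {p : (diamond n).E × Bool} :
    (DiamondGraph (n + 1)).Adj (.inr p) (.inl u) ↔ u ∈ (diamond n).ends p.1 :=
  (SimpleGraph.adj_comm _ _ _).trans diamondGraph_succ_adj_inl_inr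

@[simp]
theorem diamondGraph_succ_not_adj_inl_inl {u v : (diamond n).V} :
    ¬ (DiamondGraph (n + 1)).Adj (.inl u) (.inl v) := by
  rintro ⟨-, ⟨e, ⟨i, hi⟩⟩, h⟩
  interval_cases i <;> simp [diamond] at h

@[simp]
theorem diamondGraph_succ_not_adj_inr_inr {p q : (diamond n).E × Bool} :
    ¬ (DiamondGraph (n + 1)).Adj (.inr p) (.inr q) := by
  rintro ⟨-, ⟨e, ⟨i, hi⟩⟩, h⟩
  interval_cases i <;> simp [diamond] at h

variable {C : (DiamondGraph (n + 1)).Subgraph}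

theorem IsCycleSubgraph.adj_inl_of_inr_mem (hC : IsCycleSubgraph C) {p : (diamond n).E × Bool}
    (hp : .inr p ∈ C.verts) {u : (diamond n).V} (hu : u ∈ (diamond n).ends p.1) :
    C.Adj (.inr p) (.inl u) := by
  obtain ⟨x, y, hxy, hnbr⟩ := Set.ncard_eq_two.1 (hC.2 _ hp)
  have hx : x ∈ C.neighborSet (.inr p) := hnbr ▸ Set.mem_insert x {y}
  have hy : y ∈ C.neighborSet (.inr p) := hnbr ▸ Set.mem_insert_of_mem x rfl
  rcases x with a | _ <;> rcases y with b | _ <;>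
    have ha := C.adj_sub hx <;> have hb := C.adj_sub hy <;> simp only
      [diamondGraph_succ_adj_inr_inl, diamondGraph_succ_not_adj_inr_inr] at ha hb
  have hab : a ≠ b := fun h => hxy (congrArg _ h)
  rw [(Sym2.mem_and_mem_iff hab).1 ⟨ha, hb⟩, Sym2.mem_iff] at hu
  rcases hu with rfl | rfl
  exacts [hx, hy]

-- Collapses each quadrilateral of `D_{n+1}` back to the edge of `D_n` it replaced.
def diamondProj (C : (DiamondGraph (n + 1)).Subgraph) : (DiamondGraph n).Subgraph where
  verts := {v | .inl v ∈ C.verts}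
  Adj u v := u ≠ v ∧ ∃ p, C.Adj (.inl u) (.inr p) ∧ C.Adj (.inr p) (.inl v)
  adj_sub := by
    rintro u v ⟨huv, p, hu, hv⟩
    have hu' := C.adj_sub hu
    have hv' := C.adj_sub hv
    simp only [diamondGraph_succ_adj_inl_inr, diamondGraph_succ_adj_inr_inl] at hu' hv'
    exact EGraph.adj_iff_exists_ends.2 ⟨huv, p.1, (Sym2.mem_and_mem_iff huv).1 ⟨hu', hv'⟩⟩
  edge_vert := by
    rintro u v ⟨-, p, hu, -⟩
    exact hu.fst_mem
  symm := ⟨fun _ _ ⟨huv, p, hu, hv⟩ => ⟨huv.symm, p, hv.symm, hu.symm⟩⟩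

theorem IsCycleSubgraph.diamondProj_connected (hC : IsCycleSubgraph C) :
    (diamondProj C).Connected := by
  have hmaps : Set.MapsTo (Sum.elim id fun p => (diamond n).src p.1) C.verts
      (diamondProj C).verts := by
    rintro (v | p) hx
    · exact hx
    · exact (hC.adj_inl_of_inr_mem hx (Sym2.mem_mk_left _ _)).snd_mem
  refine SimpleGraph.Subgraph.connected_iff.2
    ⟨hC.1.preconnected.of_eq_or_adj _ hmaps (fun v hv => ⟨.inl v, hv, rfl⟩) ?_,
      hC.1.nonempty.image _ |>.mono (Set.image_subset_iff.2 hmaps)⟩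
  rintro (u | p) (v | q) h
  · exact (diamondGraph_succ_not_adj_inl_inl (C.adj_sub h)).elim
  · by_cases hu : u = (diamond n).src q.1
    · exact .inl hu
    · exact .inr ⟨hu, q, h, hC.adj_inl_of_inr_mem h.snd_mem (Sym2.mem_mk_left _ _)⟩
  · by_cases hv : (diamond n).src p.1 = v
    · exact .inl hv
    · exact .inr ⟨hv, p, (hC.adj_inl_of_inr_mem h.fst_mem (Sym2.mem_mk_left _ _)).symm, h⟩
  · exact (diamondGraph_succ_not_adj_inr_inr (C.adj_sub h)).elim

/-- Sending a neighbour `w` of `v` in `diamondProj C` to the new vertex between them is a bijection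
onto the neighbours of `v` in `C`: injective because a new vertex has only two neighbours, and
surjective because `D_n` has no multiple edges and `C` uses at most one new vertex per edge. -/
theorem IsCycleSubgraph.ncard_neighborSet_diamondProj (hC : IsCycleSubgraph C)
    (hinj : Set.InjOn Prod.fst {p | .inr p ∈ C.verts}) {v : (diamond n).V}
    (hv : v ∈ (diamondProj C).verts) : ((diamondProj C).neighborSet v).ncard = 2 := by
  rw [← hC.2 _ hv]
  refine Set.ncard_congr (fun w hw => .inr hw.2.choose) (fun w hw => hw.2.choose_spec.1) ?_ ?_
  · intro w w' hw hw' heq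
    obtain ⟨hvp, hpw⟩ := hw.2.choose_spec
    have hpw' := Sum.inr_injective heq ▸ hw'.2.choose_spec.2
    rcases Set.eq_or_eq_of_ncard_eq_two (hC.2 _ hvp.snd_mem) hvp.symm hpw hpw'
      (fun h => hw.1 (Sum.inl_injective h)) with h | h
    · exact absurd (Sum.inl_injective h).symm hw'.1
    · exact (Sum.inl_injective h).symm
  · rintro (u | p) hp
    · simpa using C.adj_sub hp
    have hvp : v ∈ (diamond n).ends p.1 := by simpa using C.adj_sub hp
    have hw : (diamondProj C).Adj v (Sym2.Mem.other hvp) :=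
      ⟨(Sym2.other_ne (Sym2.mk_isDiag_iff.not.2 (diamond_src_ne_tgt n _)) hvp).symm, p, hp,
        hC.adj_inl_of_inr_mem hp.snd_mem (Sym2.other_mem hvp)⟩
    refine ⟨_, hw, ?_⟩
    obtain ⟨hvq, hqw⟩ := hw.2.choose_spec
    have hends : (diamond n).ends hw.2.choose.1 = (diamond n).ends p.1 := by
      have hvq' := C.adj_sub hvq
      have hqw' := C.adj_sub hqw
      simp only [diamondGraph_succ_adj_inl_inr, diamondGraph_succ_adj_inr_inl] at hvq' hqw'
      exact ((Sym2.mem_and_mem_iff hw.1).1 ⟨hvq', hqw'⟩).trans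
        ((Sym2.mem_and_mem_iff hw.1).1 ⟨hvp, Sym2.other_mem hvp⟩).symm
    exact congrArg Sum.inr (hinj hvq.snd_mem hp.snd_mem (diamond_ends_injective n hends))

theorem IsCycleSubgraph.diamondProj_of_injOn (hC : IsCycleSubgraph C)
    (hinj : Set.InjOn Prod.fst {p | .inr p ∈ C.verts}) : IsCycleSubgraph (diamondProj C) :=
  ⟨hC.diamondProj_connected, fun _ hv => hC.ncard_neighborSet_diamondProj hinj hv⟩

theorem IsCycleSubgraph.ncard_verts_eq_two_mul (hC : IsCycleSubgraph C) :
    C.verts.ncard = 2 * (diamondProj C).verts.ncard := by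
  have hbip := SimpleGraph.Subgraph.ncard_inter_eq_ncard_sdiff two_ne_zero hC.2
    (S := Set.range Sum.inl) <| by
      rintro (u | p) (v | q) h
      · simp at h
      · exact ⟨fun _ ⟨_, h⟩ => Sum.inl_ne_inr h, fun _ => ⟨u, rfl⟩⟩
      · exact ⟨fun ⟨_, h⟩ => absurd h Sum.inl_ne_inr, fun h => absurd ⟨v, rfl⟩ h⟩
      · simp at h
  have hproj : (diamondProj C).verts.ncard = (C.verts ∩ Set.range Sum.inl).ncard :=
    (congrArg Set.ncard Set.preimage_inter_range.symm).trans
      (Set.ncard_preimage_of_injective_subset_range Sum.inl_injective Set.inter_subset_right)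
  rw [← Set.ncard_inter_add_ncard_sdiff_eq_ncard C.verts (Set.range Sum.inl), ← hbip, hproj,
    two_mul]

theorem IsCycleSubgraph.diamondProj_verts_eq (hC : IsCycleSubgraph C)
    {p q : (diamond n).E × Bool} (hp : .inr p ∈ C.verts) (hq : .inr q ∈ C.verts)
    (hpq : p.1 = q.1) (hne : p ≠ q) :
    (diamondProj C).verts = {(diamond n).src p.1, (diamond n).tgt p.1} := by
  refine Set.Subset.antisymm (fun v hv => Sym2.mem_iff.1 ?_)
    (fun v hv => (hC.adj_inl_of_inr_mem hp (Sym2.mem_iff.2 hv)).snd_mem)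
  -- the endpoints and the two new vertices of the edge `p.1` form a set closed under `C.Adj`
  refine SimpleGraph.Subgraph.verts_subset_of_adj_closed hC.1.preconnected
    (S := (Sum.elim (· ∈ (diamond n).ends p.1) (fun r : (diamond n).E × Bool => r.1 = p.1) :
      Set ((diamond n).V ⊕ _)))
    ?_ hp rfl hv
  rintro (u | r) (w | r') h hx
  · exact (diamondGraph_succ_not_adj_inl_inl (C.adj_sub h)).elim
  · rcases Set.eq_or_eq_of_ncard_eq_two (hC.2 _ h.fst_mem) (hC.adj_inl_of_inr_mem hp hx).symm
      (hC.adj_inl_of_inr_mem hq (hpq ▸ hx)).symm h (fun h => hne (Sum.inr_injective h)) with h | h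
    · exact congrArg Prod.fst (Sum.inr_injective h)
    · exact (congrArg Prod.fst (Sum.inr_injective h)).trans hpq.symm
  · have := C.adj_sub h
    simp only [diamondGraph_succ_adj_inr_inl] at this
    exact hx ▸ this
  · exact (diamondGraph_succ_not_adj_inr_inr (C.adj_sub h)).elim

end Succ

/-- Every cycle in `D_n` has length `2^j` for some `2 ≤ j ≤ n + 1`;
in particular the length of every cycle in `D_n` is a power of `2`. -/
theorem cycle_lengths_in_diamonds (n : ℕ) (C : (DiamondGraph n).Subgraph)
    (hC : IsCycleSubgraph C) :
    ∃ j : ℕ, 2 ≤ j ∧ j ≤ n + 1 ∧ C.verts.ncard = 2 ^ j := by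
  induction n with
  | zero => exact absurd hC (diamond_zero_not_isCycleSubgraph C)
  | succ n ih =>
    by_cases hinj : Set.InjOn Prod.fst {p | .inr p ∈ C.verts}
    · obtain ⟨j, hj2, hjn, hcard⟩ := ih _ (hC.diamondProj_of_injOn hinj)
      exact ⟨j + 1, by omega, by omega, by rw [hC.ncard_verts_eq_two_mul, hcard, pow_succ']⟩
    · unfold Set.InjOn at hinj
      push Not at hinj
      obtain ⟨p, hp, q, hq, hpq, hne⟩ := hinj
      refine ⟨2, le_rfl, by omega, ?_⟩
      rw [hC.ncard_verts_eq_two_mul, hC.diamondProj_verts_eq hp hq hpq hne,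
        Set.ncard_pair (diamond_src_ne_tgt n _)]
      rfl
end

section
/- For every n ≥ 1 and every h ∈ {1, …, n}, the unweighted Laakso graph L_n contains an isometric cycle of length 4^h: there is a cycle subgraph C of L_n with 4^h vertices such that for all vertices u, v of C the shortest-path distance in L_n equals the shortest-path distance in the cycle C, i.e., d_{L_n}(u,v) = d_C(u,v). -/
/-!
An isometric cycle of length `M ≥ 3` in `L_n` lifts to one of length `4 M` in `L_{n+1}`: replace
each step `u → v` of the cycle by the path `u, a, b, d, v` through the copy of `L_1` on the edge
`uv`. Lifting `h - 1` times the square `a, b, d, c` of a copy of `L_1` in `L_{n-h+1}` gives the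
cycle of length `4 ^ h` in `L_n`.

Walking along the lifted cycle bounds distances from above. For the lower bounds we use
potentials that change by at most one along edges and vanish at the target: the extension of
`4 · d_{L_n}(·, v)` that is linear along each copy of `L_1`, and, for a target inside the copy of
`L_1` on an edge `e`, the minimum over the two endpoints of `e` of that extension plus the
distance from the endpoint to the target, corrected to the difference of positions inside the
copy itself.
-/

namespace ZMod

/-- The distance between `i` and `j` along the cycle `ZMod N` (along the line when `N = 0`). -/
def cycleDist {N : ℕ} (i j : ZMod N) : ℕ := (j - i).valMinAbs.natAbs

variable {N : ℕ}

theorem cycleDist_eq_zero_iff {i j : ZMod N} : cycleDist i j = 0 ↔ i = j := by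
  rw [cycleDist, Int.natAbs_eq_zero, valMinAbs_eq_zero, sub_eq_zero, eq_comm]

@[simp] theorem cycleDist_self (i : ZMod N) : cycleDist i i = 0 := cycleDist_eq_zero_iff.2 rfl

theorem cycleDist_add_left (x i j : ZMod N) : cycleDist (x + i) (x + j) = cycleDist i j := by
  rw [cycleDist, cycleDist, add_sub_add_left_eq_sub]

theorem cycleDist_le_natAbs {i j : ZMod N} {m : ℤ} (hm : (m : ZMod N) = j - i) :
    cycleDist i j ≤ m.natAbs := by
  rcases eq_zero_or_neZero N with rfl | _
  · rw [cycleDist, valMinAbs_def_zero, ← hm]; rfl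
  · exact natAbs_min_of_le_div_two N _ _ (by rw [coe_valMinAbs, hm]) (natAbs_valMinAbs_le _)

theorem cycleDist_natCast_le (r s : ℕ) : cycleDist (r : ZMod N) s ≤ Nat.dist r s := by
  refine (cycleDist_le_natAbs (m := (s : ℤ) - r) (by push_cast; ring)).trans_eq ?_
  simp only [Nat.dist]
  omega

theorem cycleDist_triangle (i j k : ZMod N) : cycleDist i k ≤ cycleDist i j + cycleDist j k :=
  (cycleDist_le_natAbs (m := (j - i).valMinAbs + (k - j).valMinAbs)
    (by push_cast [coe_valMinAbs]; ring)).trans (Int.natAbs_add_le _ _)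

theorem cycleDist_add_one (hN : 2 ≤ N) (i : ZMod N) : cycleDist i (i + 1) = 1 := by
  rw [cycleDist, add_sub_cancel_left, ← Nat.cast_one, valMinAbs_natCast_of_le_half (by omega)]
  rfl

theorem sub_one_ne_add_one (hN : 3 ≤ N) (i : ZMod N) : i - 1 ≠ i + 1 := by
  intro h
  have h2 : ((2 : ℕ) : ZMod N) = 0 := by linear_combination -h
  exact absurd (Nat.le_of_dvd two_pos ((natCast_eq_zero_iff 2 N).1 h2)) (by omega)

variable {c M : ℕ}

/-- Multiplication by `c`, which is well defined as a map `ZMod M → ZMod (c * M)`. -/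
def scaleHom (c M : ℕ) : ZMod M →+ ZMod (c * M) :=
  ZMod.lift M ⟨(Int.castAddHom (ZMod (c * M))).comp (AddMonoidHom.mulLeft (c : ℤ)), by
    change (((c * M : ℕ) : ℤ) : ZMod (c * M)) = 0
    rw [Int.cast_natCast, natCast_self]⟩

theorem scaleHom_intCast (m : ℤ) : scaleHom c M m = ((c * m : ℤ) : ZMod (c * M)) :=
  lift_coe _ _ _

theorem scaleHom_natCast (m : ℕ) : scaleHom c M m = ((c * m : ℕ) : ZMod (c * M)) := by
  simpa using scaleHom_intCast (c := c) (M := M) m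

theorem scaleHom_add_one (q : ZMod M) : scaleHom c M (q + 1) = scaleHom c M q + c := by
  rw [map_add, ← Nat.cast_one, scaleHom_natCast, mul_one]

theorem cycleDist_scaleHom_le (a b : ZMod M) :
    cycleDist (scaleHom c M a) (scaleHom c M b) ≤ c * cycleDist a b := by
  refine (cycleDist_le_natAbs (m := c * (b - a).valMinAbs) ?_).trans_eq ?_
  · rw [← map_sub, ← scaleHom_intCast, coe_valMinAbs]
  · rw [Int.natAbs_mul, Int.natAbs_natCast, cycleDist]

theorem cycleDist_scaleHom_add_le {r r' : ℕ} (hr : r ≤ c) (hr' : r' ≤ c) (q q' : ZMod M) :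
    cycleDist (scaleHom c M q + (r : ZMod (c * M))) (scaleHom c M q' + (r' : ZMod (c * M))) ≤
      min (min (c * cycleDist q q' + r) (c * cycleDist (q + 1) q' + (c - r)) + r')
        (min (c * cycleDist q (q' + 1) + r) (c * cycleDist (q + 1) (q' + 1) + (c - r)) +
          (c - r')) := by
  set x := scaleHom c M q + (r : ZMod (c * M))
  set y := scaleHom c M q' + (r' : ZMod (c * M))
  have hx : cycleDist x (scaleHom c M q) ≤ r := by
    simpa using cycleDist_le_natAbs (i := x) (j := scaleHom c M q) (m := -r) (by simp [x])
  have hx' : cycleDist x (scaleHom c M (q + 1)) ≤ c - r := by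
    simpa using cycleDist_le_natAbs (i := x) (j := scaleHom c M (q + 1))
      (m := ((c - r : ℕ) : ℤ)) (by rw [scaleHom_add_one]; push_cast [x, Nat.cast_sub hr]; ring)
  have hy : cycleDist (scaleHom c M q') y ≤ r' := by
    simpa using cycleDist_le_natAbs (i := scaleHom c M q') (j := y) (m := r') (by simp [y])
  have hy' : cycleDist (scaleHom c M (q' + 1)) y ≤ c - r' := by
    simpa using cycleDist_le_natAbs (i := scaleHom c M (q' + 1)) (j := y)
      (m := -((c - r' : ℕ) : ℤ)) (by rw [scaleHom_add_one]; push_cast [y, Nat.cast_sub hr']; ring)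
  have hxy (a b : ZMod M) : cycleDist x y ≤
      cycleDist x (scaleHom c M a) + c * cycleDist a b + cycleDist (scaleHom c M b) y := by
    have := cycleDist_triangle x (scaleHom c M a) (scaleHom c M b)
    have := cycleDist_triangle x (scaleHom c M b) y
    have := cycleDist_scaleHom_le (c := c) a b
    omega
  have := hxy q q'
  have := hxy (q + 1) q'
  have := hxy q (q' + 1)
  have := hxy (q + 1) (q' + 1)
  omega

/-- The index of the block containing `k` when `ZMod (c * M)` is cut into `M` blocks of length
`c`. -/
def blockIndex (c M : ℕ) (k : ZMod (c * M)) : ZMod M := ((k.val / c : ℕ) : ZMod M)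

def blockOffset (c M : ℕ) (k : ZMod (c * M)) : ℕ := k.val % c

variable [NeZero c]

theorem blockOffset_lt (k : ZMod (c * M)) : blockOffset c M k < c :=
  Nat.mod_lt _ (NeZero.pos c)

variable [NeZero M]

theorem scaleHom_blockIndex_add_blockOffset (k : ZMod (c * M)) :
    scaleHom c M (blockIndex c M k) + blockOffset c M k = k := by
  rw [blockIndex, blockOffset, scaleHom_natCast, ← Nat.cast_add, Nat.div_add_mod,
    natCast_zmod_val]

theorem exists_eq_scaleHom_add (k : ZMod (c * M)) :
    ∃ q r, r < c ∧ k = scaleHom c M q + (r : ZMod (c * M)) :=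
  ⟨_, _, blockOffset_lt k, (scaleHom_blockIndex_add_blockOffset k).symm⟩

theorem blockIndex_blockOffset_scaleHom_add {q : ZMod M} {r : ℕ} (hr : r < c) :
    blockIndex c M (scaleHom c M q + r) = q ∧ blockOffset c M (scaleHom c M q + r) = r := by
  have hval : (scaleHom c M q + r).val = c * q.val + r := by
    rw [← natCast_zmod_val q, scaleHom_natCast, ← Nat.cast_add, val_natCast_of_lt, val_natCast]
    · rw [Nat.mod_eq_of_lt (val_lt q)]
    · have := val_lt q
      nlinarith
  constructor
  · rw [blockIndex, hval, Nat.mul_add_div (NeZero.pos c), Nat.div_eq_of_lt hr, add_zero,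
      natCast_zmod_val]
  · rw [blockOffset, hval, Nat.mul_add_mod, Nat.mod_eq_of_lt hr]

end ZMod

open ZMod

namespace SimpleGraph

variable {V : Type*} {G : SimpleGraph V}

def IsLipschitz (G : SimpleGraph V) (F : V → ℕ) : Prop := ∀ ⦃x y⦄, G.Adj x y → F x ≤ F y + 1

theorem isLipschitz_dist (v : V) : G.IsLipschitz (G.dist · v) := fun x y hxy => by
  change G.dist x v ≤ G.dist y v + 1
  rw [dist_comm, dist_comm (u := y)]
  rcases hxy.diff_dist_adj (u := v) with h | h | h <;> omega

theorem IsLipschitz.le_add_length {F : V → ℕ} (hF : G.IsLipschitz F) {x y : V}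
    (p : G.Walk x y) : F x ≤ F y + p.length := by
  induction p with
  | nil => simp
  | cons hxz _ ih => have := hF hxz; simp only [Walk.length_cons]; omega

theorem IsLipschitz.le_add_dist {F : V → ℕ} (hF : G.IsLipschitz F) {x y : V}
    (h : G.Reachable x y) : F x ≤ F y + G.dist x y := by
  obtain ⟨p, hp⟩ := h.exists_walk_length_eq_dist
  exact hp ▸ hF.le_add_length p

section ClosedWalk

variable {N : ℕ} {g : ZMod N → V} (hg : ∀ i, G.Adj (g i) (g (i + 1)))
include hg

theorem exists_walk_length_natAbs (i : ZMod N) (m : ℤ) :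
    ∃ p : G.Walk (g i) (g (i + m)), p.length = m.natAbs := by
  induction m using Int.induction_on with
  | zero => exact ⟨Walk.nil.copy rfl (by simp), by simp⟩
  | succ m ih =>
    obtain ⟨p, hp⟩ := ih
    refine ⟨(p.concat (hg _)).copy rfl (by push_cast; ring_nf), ?_⟩
    simp only [Walk.length_copy, Walk.length_concat, hp]
    omega
  | pred m ih =>
    obtain ⟨p, hp⟩ := ih
    have hadj : G.Adj (g (i + ↑(-(m : ℤ)))) (g (i + ↑(-(m : ℤ) - 1))) := by
      convert (hg (i + ↑(-(m : ℤ) - 1))).symm using 2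
      push_cast; ring
    refine ⟨p.concat hadj, ?_⟩
    simp only [Walk.length_concat, hp]
    omega

theorem reachable_of_adj_add_one (i j : ZMod N) : G.Reachable (g i) (g j) := by
  obtain ⟨p, -⟩ := exists_walk_length_natAbs hg i (j - i).valMinAbs
  exact ⟨p.copy rfl (by rw [coe_valMinAbs, add_sub_cancel])⟩

theorem dist_le_cycleDist_of_adj_add_one (i j : ZMod N) :
    G.dist (g i) (g j) ≤ cycleDist i j := by
  obtain ⟨p, hp⟩ := exists_walk_length_natAbs hg i (j - i).valMinAbs
  exact (dist_le (p.copy rfl (by rw [coe_valMinAbs, add_sub_cancel]))).trans_eq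
    (by rw [Walk.length_copy, hp]; rfl)

end ClosedWalk

/-- For `N ≥ 2` this makes `f` injective with consecutive values adjacent
(`IsIsometricCycle.injective`, `IsIsometricCycle.adj`). -/
def IsIsometricCycle {N : ℕ} (G : SimpleGraph V) (f : ZMod N → V) : Prop :=
  ∀ i j, G.dist (f i) (f j) = cycleDist i j

namespace IsIsometricCycle

variable {N : ℕ} {f : ZMod N → V}

theorem of_adj_of_le (hadj : ∀ i, G.Adj (f i) (f (i + 1)))
    (hle : ∀ i j, cycleDist i j ≤ G.dist (f i) (f j)) : G.IsIsometricCycle f := fun i j =>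
  (dist_le_cycleDist_of_adj_add_one hadj i j).antisymm (hle i j)

theorem injective (hf : G.IsIsometricCycle f) : Function.Injective f := fun i j hij =>
  cycleDist_eq_zero_iff.1 (by rw [← hf, hij, dist_self])

theorem adj (hf : G.IsIsometricCycle f) (hN : 2 ≤ N) (i : ZMod N) : G.Adj (f i) (f (i + 1)) :=
  dist_eq_one_iff_adj.1 (by rw [hf, cycleDist_add_one hN])

theorem eq_of_sym2_eq (hf : G.IsIsometricCycle f) (hN : 3 ≤ N) {i j : ZMod N}
    (h : s(f i, f (i + 1)) = s(f j, f (j + 1))) : i = j := by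
  rcases Sym2.eq_iff.1 h with ⟨h, -⟩ | ⟨h₁, h₂⟩
  · exact hf.injective h
  · rw [hf.injective h₁] at h₂
    exact absurd (by linear_combination -hf.injective h₂) (sub_one_ne_add_one hN j)

end IsIsometricCycle

section CycleSubgraph

variable {V : Type} {G : SimpleGraph V} {N : ℕ} {f : ZMod N → V}
  (hadj : ∀ i, G.Adj (f i) (f (i + 1)))

def cycleSubgraph : G.Subgraph := ⨆ i, G.subgraphOfAdj (hadj i)

theorem verts_cycleSubgraph : (cycleSubgraph hadj).verts = Set.range f := by
  simp only [cycleSubgraph, Subgraph.verts_iSup, subgraphOfAdj_verts]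
  ext x
  simp only [Set.mem_iUnion, Set.mem_insert_iff, Set.mem_singleton_iff, Set.mem_range]
  exact ⟨fun ⟨i, h⟩ => h.elim (⟨i, ·.symm⟩) (⟨i + 1, ·.symm⟩), fun ⟨i, h⟩ => ⟨i, .inl h.symm⟩⟩

theorem cycleSubgraph_adj {x y : V} :
    (cycleSubgraph hadj).Adj x y ↔ ∃ i, s(f i, f (i + 1)) = s(x, y) := by
  simp [cycleSubgraph, Subgraph.iSup_adj, subgraphOfAdj_adj]

theorem mem_verts_cycleSubgraph (i : ZMod N) : f i ∈ (cycleSubgraph hadj).verts :=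
  verts_cycleSubgraph hadj ▸ Set.mem_range_self i

theorem neighborSet_cycleSubgraph (hf : Function.Injective f) (i : ZMod N) :
    (cycleSubgraph hadj).neighborSet (f i) = {f (i - 1), f (i + 1)} := by
  ext w
  simp only [Subgraph.mem_neighborSet, cycleSubgraph_adj, Sym2.eq_iff, Set.mem_insert_iff,
    Set.mem_singleton_iff]
  constructor
  · rintro ⟨j, ⟨hj, rfl⟩ | ⟨rfl, hj⟩⟩
    · rw [hf hj]; exact .inr rfl
    · rw [← hf hj, add_sub_cancel_right]; exact .inl rfl
  · rintro (rfl | rfl)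
    · exact ⟨i - 1, .inr ⟨rfl, by rw [sub_add_cancel]⟩⟩
    · exact ⟨i, .inl ⟨rfl, rfl⟩⟩

theorem adj_coe_cycleSubgraph (i : ZMod N) :
    (cycleSubgraph hadj).coe.Adj ⟨f i, mem_verts_cycleSubgraph hadj i⟩
      ⟨f (i + 1), mem_verts_cycleSubgraph hadj (i + 1)⟩ :=
  (cycleSubgraph_adj hadj).2 ⟨i, rfl⟩

theorem cycleSubgraph_connected : (cycleSubgraph hadj).Connected := by
  rw [Subgraph.connected_iff', connected_iff]
  refine ⟨fun ⟨x, hx⟩ ⟨y, hy⟩ => ?_, ⟨⟨f 0, mem_verts_cycleSubgraph hadj 0⟩⟩⟩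
  obtain ⟨i, rfl⟩ := verts_cycleSubgraph hadj ▸ hx
  obtain ⟨j, rfl⟩ := verts_cycleSubgraph hadj ▸ hy
  exact reachable_of_adj_add_one (adj_coe_cycleSubgraph hadj) i j

theorem IsIsometricCycle.dist_eq_coe_dist_cycleSubgraph (hf : G.IsIsometricCycle f)
    (i j : ZMod N) : G.dist (f i) (f j) = (cycleSubgraph hadj).coe.dist
      ⟨f i, mem_verts_cycleSubgraph hadj i⟩ ⟨f j, mem_verts_cycleSubgraph hadj j⟩ := by
  have hg := adj_coe_cycleSubgraph hadj
  refine le_antisymm ?_ ((hf i j).trans_ge (dist_le_cycleDist_of_adj_add_one hg i j))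
  obtain ⟨p, hp⟩ := (reachable_of_adj_add_one hg i j).exists_walk_length_eq_dist
  exact (dist_le (p.map (cycleSubgraph hadj).hom)).trans_eq (by rw [Walk.length_map, hp])

theorem IsIsometricCycle.exists_isCycleSubgraph (hf : G.IsIsometricCycle f) (hN : 3 ≤ N) :
    ∃ C : G.Subgraph, IsCycleSubgraph C ∧ C.verts.ncard = N ∧
      ∀ (u v : V) (hu : u ∈ C.verts) (hv : v ∈ C.verts),
        G.dist u v = C.coe.dist ⟨u, hu⟩ ⟨v, hv⟩ := by
  have hadj := hf.adj (by omega)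
  have hverts := verts_cycleSubgraph hadj
  refine ⟨cycleSubgraph hadj, ⟨cycleSubgraph_connected hadj, ?_⟩, ?_, ?_⟩
  · intro v hv
    obtain ⟨i, rfl⟩ := hverts ▸ hv
    rw [neighborSet_cycleSubgraph hadj hf.injective,
      Set.ncard_pair (hf.injective.ne (sub_one_ne_add_one hN i))]
  · rw [hverts, Set.ncard_range_of_injective hf.injective, Nat.card_zmod]
  · intro u v hu hv
    obtain ⟨i, rfl⟩ := hverts ▸ hu
    obtain ⟨j, rfl⟩ := hverts ▸ hv
    exact hf.dist_eq_coe_dist_cycleSubgraph hadj i j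

end CycleSubgraph

end SimpleGraph

open SimpleGraph

theorem EGraph.isLipschitz_of_forall_edge (G : EGraph) {F : G.V → ℕ}
    (h : ∀ e, F (G.src e) ≤ F (G.tgt e) + 1 ∧ F (G.tgt e) ≤ F (G.src e) + 1) :
    G.toSimpleGraph.IsLipschitz F := by
  rintro x y ⟨-, e, ⟨rfl, rfl⟩ | ⟨rfl, rfl⟩⟩
  exacts [(h e).1, (h e).2]

namespace Laakso

variable {n : ℕ}

instance nonempty_edge : ∀ n, Nonempty (laakso n).E
  | 0 => ⟨()⟩
  | n + 1 => have := nonempty_edge n; ⟨(Classical.arbitrary _, 0)⟩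

theorem src_ne_tgt : ∀ {n : ℕ} (e : (laakso n).E), (laakso n).src e ≠ (laakso n).tgt e
  | 0, _ => Bool.false_ne_true
  | _ + 1, ⟨_, j⟩ => by fin_cases j <;> simp [laakso]

theorem adj_src_tgt (e : (laakso n).E) :
    (LaaksoGraph n).Adj ((laakso n).src e) ((laakso n).tgt e) :=
  ⟨src_ne_tgt e, e, .inl ⟨rfl, rfl⟩⟩

theorem forall_gadget_edge {P : (laakso (n + 1)).V → (laakso (n + 1)).V → Prop}
    (e : (laakso n).E)
    (h : P (.inl ((laakso n).src e)) (.inr (e, 0)) ∧ P (.inr (e, 0)) (.inr (e, 1)) ∧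
      P (.inr (e, 0)) (.inr (e, 2)) ∧ P (.inr (e, 1)) (.inr (e, 3)) ∧
      P (.inr (e, 2)) (.inr (e, 3)) ∧ P (.inr (e, 3)) (.inl ((laakso n).tgt e)))
    (j : Fin 6) : P ((laakso (n + 1)).src (e, j)) ((laakso (n + 1)).tgt (e, j)) := by
  obtain ⟨h0, h1, h2, h3, h4, h5⟩ := h
  fin_cases j <;> assumption

/-- Distance from `u` of the vertices `a, b, c, d` of the copy of `L_1` on an edge `uv`. -/
def pos : Fin 4 → ℕ := ![1, 2, 2, 3]

/-- The extension of `4 φ` that is linear along the copies of `L_1`. -/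
def liftPot (φ : (laakso n).V → ℕ) : (laakso (n + 1)).V → ℕ
  | .inl w => 4 * φ w
  | .inr (e, i) =>
    min (4 * φ ((laakso n).src e) + pos i) (4 * φ ((laakso n).tgt e) + (4 - pos i))

theorem isLipschitz_liftPot {φ : (laakso n).V → ℕ} (hφ : (LaaksoGraph n).IsLipschitz φ) :
    (LaaksoGraph (n + 1)).IsLipschitz (liftPot φ) := by
  refine EGraph.isLipschitz_of_forall_edge _ fun ⟨e, j⟩ => forall_gadget_edge (P := fun x y =>
    liftPot φ x ≤ liftPot φ y + 1 ∧ liftPot φ y ≤ liftPot φ x + 1) e ?_ j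
  have := hφ (adj_src_tgt e)
  have := hφ (adj_src_tgt e).symm
  simp only [liftPot, pos, Matrix.cons_val]
  omega

/-- The path `u, a, b, d, v` through the copy of `L_1` on the edge `e = uv`. -/
def gadgetPath (e : (laakso n).E) : ℕ → (laakso (n + 1)).V
  | 0 => .inl ((laakso n).src e)
  | 1 => .inr (e, 0)
  | 2 => .inr (e, 1)
  | 3 => .inr (e, 3)
  | _ + 4 => .inl ((laakso n).tgt e)

theorem adj_gadgetPath (e : (laakso n).E) {r : ℕ} (hr : r < 4) :
    (LaaksoGraph (n + 1)).Adj (gadgetPath e r) (gadgetPath e (r + 1)) := by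
  interval_cases r
  exacts [adj_src_tgt (n := n + 1) (e, 0), adj_src_tgt (n := n + 1) (e, 1),
    adj_src_tgt (n := n + 1) (e, 3), adj_src_tgt (n := n + 1) (e, 5)]

theorem liftPot_gadgetPath {φ : (laakso n).V → ℕ} (hφ : (LaaksoGraph n).IsLipschitz φ)
    (e : (laakso n).E) {r : ℕ} (hr : r ≤ 4) :
    liftPot φ (gadgetPath e r) =
      min (4 * φ ((laakso n).src e) + r) (4 * φ ((laakso n).tgt e) + (4 - r)) := by
  have := hφ (adj_src_tgt e)
  have := hφ (adj_src_tgt e).symm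
  interval_cases r <;> simp only [gadgetPath, liftPot, pos, Matrix.cons_val] <;> omega

noncomputable def exitPot (e : (laakso n).E) (p : ℕ) (x : (laakso (n + 1)).V) : ℕ :=
  min (liftPot ((LaaksoGraph n).dist · ((laakso n).src e)) x + p)
    (liftPot ((LaaksoGraph n).dist · ((laakso n).tgt e)) x + (4 - p))

open Classical in
/-- Lower bound for the distance to the point at distance `p` from `u` along `gadgetPath e`:
a path from outside the copy of `L_1` on `e = uv` enters it through `u` or `v`. -/
noncomputable def gadgetPot (e : (laakso n).E) (p : ℕ) : (laakso (n + 1)).V → ℕ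
  | .inr (e', i) => if e' = e then Nat.dist (pos i) p else exitPot e p (.inr (e', i))
  | x => exitPot e p x

theorem gadgetPot_of_forall_ne {e : (laakso n).E} {p : ℕ} {x : (laakso (n + 1)).V}
    (hx : ∀ i, x ≠ .inr (e, i)) : gadgetPot e p x = exitPot e p x := by
  rcases x with w | ⟨e', i⟩
  · rfl
  · have he : e' ≠ e := by rintro rfl; exact hx i rfl
    simp [gadgetPot, he]

theorem isLipschitz_exitPot (e : (laakso n).E) (p : ℕ) :
    (LaaksoGraph (n + 1)).IsLipschitz (exitPot e p) := fun x y hxy => by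
  have := isLipschitz_liftPot (isLipschitz_dist ((laakso n).src e)) hxy
  have := isLipschitz_liftPot (isLipschitz_dist ((laakso n).tgt e)) hxy
  simp only [exitPot]
  omega

theorem isLipschitz_gadgetPot (e : (laakso n).E) {p : ℕ} (hp : p ≤ 4) :
    (LaaksoGraph (n + 1)).IsLipschitz (gadgetPot e p) := by
  refine EGraph.isLipschitz_of_forall_edge _ fun ⟨e', j⟩ => ?_
  by_cases he : e' = e
  · subst he
    refine forall_gadget_edge (P := fun x y =>
      gadgetPot e' p x ≤ gadgetPot e' p y + 1 ∧ gadgetPot e' p y ≤ gadgetPot e' p x + 1) e' ?_ j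
    have h1 := dist_eq_one_iff_adj.2 (adj_src_tgt e')
    have h2 := dist_eq_one_iff_adj.2 (adj_src_tgt e').symm
    simp only [gadgetPot, exitPot, liftPot, dist_self, h1, h2, pos, Matrix.cons_val, Nat.dist,
      ↓reduceIte]
    omega
  · have hx (i : Fin 4) : (laakso (n + 1)).src (e', j) ≠ .inr (e, i) ∧
        (laakso (n + 1)).tgt (e', j) ≠ .inr (e, i) := by
      fin_cases j <;> simp [laakso, he]
    have := isLipschitz_exitPot e p (adj_src_tgt (n := n + 1) (e', j))
    have := isLipschitz_exitPot e p (adj_src_tgt (n := n + 1) (e', j)).symm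
    rw [gadgetPot_of_forall_ne fun i => (hx i).1, gadgetPot_of_forall_ne fun i => (hx i).2]
    omega

theorem gadgetPot_gadgetPath (e : (laakso n).E) {p r : ℕ} (hp : p ≤ 4) (hr : r ≤ 4) :
    gadgetPot e p (gadgetPath e r) = Nat.dist r p := by
  have h1 := dist_eq_one_iff_adj.2 (adj_src_tgt e)
  have h2 := dist_eq_one_iff_adj.2 (adj_src_tgt e).symm
  interval_cases r <;>
    simp only [gadgetPath, gadgetPot, exitPot, liftPot, dist_self, h1, h2, pos, Matrix.cons_val,
      Nat.dist, ↓reduceIte] <;> omega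

def Joins (e : (laakso n).E) (o : Bool) (u v : (laakso n).V) : Prop :=
  if o then (laakso n).src e = u ∧ (laakso n).tgt e = v
  else (laakso n).src e = v ∧ (laakso n).tgt e = u

theorem exists_joins_of_adj {u v : (laakso n).V} (h : (LaaksoGraph n).Adj u v) :
    ∃ e o, Joins e o u v := by
  obtain ⟨-, e, h | h⟩ := h
  exacts [⟨e, true, h⟩, ⟨e, false, h⟩]

theorem Joins.sym2_eq {e : (laakso n).E} {o : Bool} {u v : (laakso n).V} (h : Joins e o u v) :
    s((laakso n).src e, (laakso n).tgt e) = s(u, v) := by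
  cases o <;> obtain ⟨rfl, rfl⟩ := h
  exacts [Sym2.eq_swap, rfl]

def orient : Bool → ℕ → ℕ
  | true, r => r
  | false, r => 4 - r

/-- For `Joins e o u v`, the vertex at distance `r` from `u` on the path from `u` to `v` through
the copy of `L_1` on `e`. -/
def joinPath (e : (laakso n).E) (o : Bool) (r : ℕ) : (laakso (n + 1)).V :=
  gadgetPath e (orient o r)

section Joins

variable {e : (laakso n).E} {o : Bool} {u v : (laakso n).V}

theorem joinPath_zero (h : Joins e o u v) : joinPath e o 0 = .inl u := by
  cases o <;> obtain ⟨rfl, rfl⟩ := h <;> rfl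

theorem joinPath_four (h : Joins e o u v) : joinPath e o 4 = .inl v := by
  cases o <;> obtain ⟨rfl, rfl⟩ := h <;> rfl

theorem adj_joinPath {r : ℕ} (hr : r < 4) :
    (LaaksoGraph (n + 1)).Adj (joinPath e o r) (joinPath e o (r + 1)) := by
  cases o
  · have := (adj_gadgetPath e (r := 3 - r) (by omega)).symm
    rwa [show 3 - r + 1 = 4 - r by omega, ← show 4 - (r + 1) = 3 - r by omega] at this
  · exact adj_gadgetPath e hr

theorem joinPath_ne_inr {e' : (laakso n).E} (he : e ≠ e') (r : ℕ) (i : Fin 4) :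
    joinPath e o r ≠ .inr (e', i) := by
  unfold joinPath
  generalize orient o r = p
  rcases p with _ | _ | _ | _ | p
  any_goals exact Sum.inl_ne_inr
  all_goals exact fun h => he (congrArg Prod.fst (Sum.inr_injective h))

theorem liftPot_joinPath {φ : (laakso n).V → ℕ} (hφ : (LaaksoGraph n).IsLipschitz φ)
    (h : Joins e o u v) {r : ℕ} (hr : r ≤ 4) :
    liftPot φ (joinPath e o r) = min (4 * φ u + r) (4 * φ v + (4 - r)) := by
  cases o <;> obtain ⟨rfl, rfl⟩ := h <;> simp only [joinPath, orient]
  · rw [liftPot_gadgetPath hφ e (by omega)]; omega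
  · rw [liftPot_gadgetPath hφ e hr]

theorem gadgetPot_joinPath {r r' : ℕ} (hr : r ≤ 4) (hr' : r' ≤ 4) :
    gadgetPot e (orient o r') (joinPath e o r) = Nat.dist r r' := by
  cases o <;> simp only [joinPath, orient] <;> rw [gadgetPot_gadgetPath e (by omega) (by omega)]
  simp only [Nat.dist]; omega

theorem gadgetPot_orient_of_forall_ne (h : Joins e o u v) {r' : ℕ} (hr' : r' ≤ 4)
    {x : (laakso (n + 1)).V} (hx : ∀ i, x ≠ .inr (e, i)) :
    gadgetPot e (orient o r') x = min (liftPot ((LaaksoGraph n).dist · u) x + r')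
      (liftPot ((LaaksoGraph n).dist · v) x + (4 - r')) := by
  rw [gadgetPot_of_forall_ne hx, exitPot]
  cases o <;> obtain ⟨rfl, rfl⟩ := h <;> simp only [orient]; omega

end Joins

section Lift

variable {M : ℕ} {f : ZMod M → (laakso n).V} {e : ZMod M → (laakso n).E} {o : ZMod M → Bool}

/-- The cycle in `L_{n+1}` which replaces each step from `f q` to `f (q + 1)` by the path of
length `4` through the copy of `L_1` on the edge `e q`. -/
def liftCycle (e : ZMod M → (laakso n).E) (o : ZMod M → Bool) (k : ZMod (4 * M)) :
    (laakso (n + 1)).V :=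
  joinPath (e (blockIndex 4 M k)) (o (blockIndex 4 M k)) (blockOffset 4 M k)

variable [NeZero M] (hj : ∀ q, Joins (e q) (o q) (f q) (f (q + 1)))
include hj

theorem liftCycle_scaleHom_add (q : ZMod M) {r : ℕ} (hr : r ≤ 4) :
    liftCycle e o (scaleHom 4 M q + (r : ZMod (4 * M))) = joinPath (e q) (o q) r := by
  rcases hr.lt_or_eq with hr | rfl
  · obtain ⟨h₁, h₂⟩ := blockIndex_blockOffset_scaleHom_add (q := q) hr
    rw [liftCycle, h₁, h₂]
  · obtain ⟨h₁, h₂⟩ :=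
      blockIndex_blockOffset_scaleHom_add (q := q + 1) (c := 4) (r := 0) four_pos
    rw [Nat.cast_zero, add_zero, scaleHom_add_one] at h₁ h₂
    rw [liftCycle, h₁, h₂, joinPath_zero (hj _), joinPath_four (hj q)]

theorem adj_liftCycle (k : ZMod (4 * M)) :
    (LaaksoGraph (n + 1)).Adj (liftCycle e o k) (liftCycle e o (k + 1)) := by
  obtain ⟨q, r, hr, rfl⟩ := exists_eq_scaleHom_add k
  rw [add_assoc, ← Nat.cast_succ, liftCycle_scaleHom_add hj q hr.le,
    liftCycle_scaleHom_add hj q hr]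
  exact adj_joinPath hr

theorem cycleDist_le_dist_liftCycle (hf : (LaaksoGraph n).IsIsometricCycle f) (hM : 3 ≤ M)
    (k k' : ZMod (4 * M)) :
    cycleDist k k' ≤ (LaaksoGraph (n + 1)).dist (liftCycle e o k) (liftCycle e o k') := by
  have hreach := reachable_of_adj_add_one (adj_liftCycle hj) k k'
  obtain ⟨q, r, hr, rfl⟩ := exists_eq_scaleHom_add k
  obtain ⟨q', r', hr', rfl⟩ := exists_eq_scaleHom_add k'
  rw [liftCycle_scaleHom_add hj q hr.le, liftCycle_scaleHom_add hj q' hr'.le] at hreach ⊢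
  have hF := (isLipschitz_gadgetPot (e q') (p := orient (o q') r')
    (by cases o q' <;> simp only [orient] <;> omega)).le_add_dist hreach
  rw [gadgetPot_joinPath hr'.le hr'.le, Nat.dist_self, zero_add] at hF
  refine le_trans ?_ hF
  by_cases hq : q = q'
  · subst hq
    rw [gadgetPot_joinPath hr.le hr'.le, cycleDist_add_left]
    exact cycleDist_natCast_le r r'
  · have he : e q ≠ e q' := fun h =>
      hq (hf.eq_of_sym2_eq hM (by rw [← (hj q).sym2_eq, ← (hj q').sym2_eq, h]))
    rw [gadgetPot_orient_of_forall_ne (hj q') hr'.le (joinPath_ne_inr he r),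
      liftPot_joinPath (isLipschitz_dist _) (hj q) hr.le,
      liftPot_joinPath (isLipschitz_dist _) (hj q) hr.le, hf, hf, hf, hf]
    exact cycleDist_scaleHom_add_le hr.le hr'.le q q'

end Lift

theorem exists_isIsometricCycle_four_mul {M : ℕ} (hM : 3 ≤ M) {f : ZMod M → (laakso n).V}
    (hf : (LaaksoGraph n).IsIsometricCycle f) :
    ∃ g : ZMod (4 * M) → (laakso (n + 1)).V, (LaaksoGraph (n + 1)).IsIsometricCycle g := by
  have : NeZero M := ⟨by omega⟩
  choose e o hj using fun q => exists_joins_of_adj (hf.adj (by omega) q)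
  exact ⟨liftCycle e o, .of_adj_of_le (adj_liftCycle hj) (cycleDist_le_dist_liftCycle hj hf hM)⟩

/-- `a` and `d`, and `b` and `c`, are the opposite corners of the square `a b d c` in `L_1`. -/
theorem not_adj_inr_of_val_add_eq_three {e e' : (laakso n).E} {i j : Fin 4}
    (hij : i.val + j.val = 3) : ¬ (LaaksoGraph (n + 1)).Adj (.inr (e, i)) (.inr (e', j)) := by
  rintro ⟨-, ⟨e₀, k⟩, h⟩
  fin_cases k <;> grind [laakso]

/-- The square `a, b, d, c` in the copy of `L_1` on the edge `e`. -/
def squareCycle (e : (laakso n).E) (i : ZMod 4) : (laakso (n + 1)).V :=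
  .inr (e, ![0, 1, 3, 2] i)

theorem isIsometricCycle_squareCycle (e : (laakso n).E) :
    (LaaksoGraph (n + 1)).IsIsometricCycle (squareCycle e) := by
  have hadj (i : ZMod 4) :
      (LaaksoGraph (n + 1)).Adj (squareCycle e i) (squareCycle e (i + 1)) := by
    have h (j : Fin 6) := adj_src_tgt (n := n + 1) (e, j)
    fin_cases i
    exacts [h 1, h 3, (h 4).symm, (h 2).symm]
  refine .of_adj_of_le hadj fun i j => ?_
  have hreach := reachable_of_adj_add_one hadj i j
  have hinj : Function.Injective (squareCycle e) := fun i j h =>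
    (by decide : Function.Injective (![0, 1, 3, 2] : Fin 4 → Fin 4))
      (congrArg Prod.snd (Sum.inr_injective h))
  rcases (by decide : ∀ i j : ZMod 4, i = j ∨ (i ≠ j ∧ cycleDist i j = 1) ∨
    (i ≠ j ∧ j = i + 2 ∧ cycleDist i j = 2)) i j with rfl | ⟨hne, h⟩ | ⟨hne, rfl, h⟩
  · simp
  · rw [h]
    exact hreach.pos_dist_of_ne (hinj.ne hne)
  · rw [h]
    refine hreach.one_lt_dist_of_ne_of_not_adj (hinj.ne hne) ?_
    apply not_adj_inr_of_val_add_eq_three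
    fin_cases i <;> rfl

theorem exists_isIsometricCycle (m k : ℕ) : ∃ f : ZMod (4 ^ (k + 1)) → (laakso (m + k + 1)).V,
    (LaaksoGraph (m + k + 1)).IsIsometricCycle f := by
  induction k with
  | zero => exact ⟨squareCycle (Classical.arbitrary _), isIsometricCycle_squareCycle _⟩
  | succ k ih =>
    obtain ⟨f, hf⟩ := ih
    rw [pow_succ']
    exact exists_isIsometricCycle_four_mul
      (le_trans (by norm_num) (Nat.le_self_pow (Nat.succ_ne_zero k) 4)) hf

end Laakso

theorem laakso_contains_isometric_cycles_general (n h : ℕ) (h1 : 1 ≤ h) (hh : h ≤ n) :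
    ∃ C : (LaaksoGraph n).Subgraph, IsCycleSubgraph C ∧ C.verts.ncard = 4 ^ h ∧
      ∀ (u v : (laakso n).V) (hu : u ∈ C.verts) (hv : v ∈ C.verts),
        (LaaksoGraph n).dist u v = C.coe.dist ⟨u, hu⟩ ⟨v, hv⟩ := by
  obtain ⟨k, rfl⟩ : ∃ k, h = k + 1 := ⟨h - 1, by omega⟩
  obtain ⟨m, rfl⟩ : ∃ m, n = m + k + 1 := ⟨n - k - 1, by omega⟩
  obtain ⟨f, hf⟩ := Laakso.exists_isIsometricCycle m k
  exact hf.exists_isCycleSubgraph (le_trans (by norm_num) (Nat.le_self_pow k.succ_ne_zero 4))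

/-- For every `n ≥ 1` and every `h ∈ {1, …, n}` the Laakso graph `L_n`
contains an isometric cycle of length `4^h`: a cycle subgraph `C` with `4^h` vertices such
that for all vertices `u, v` of `C` the distance in `L_n` equals the distance in `C`. -/
theorem laakso_contains_isometric_cycles (n h : ℕ) (hn : 1 ≤ n) (h1 : 1 ≤ h) (hh : h ≤ n) :
    ∃ C : (LaaksoGraph n).Subgraph, IsCycleSubgraph C ∧ C.verts.ncard = 4 ^ h ∧
      ∀ (u v : (laakso n).V) (hu : u ∈ C.verts) (hv : v ∈ C.verts),
        (LaaksoGraph n).dist u v = C.coe.dist ⟨u, hu⟩ ⟨v, hv⟩ :=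
  laakso_contains_isometric_cycles_general n h h1 hh
end
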